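/- arXiv:2305.07770 — 12 statements merged into one kernel-verified Lean document; each statement's English description precedes it below -/
import Mathlib

section
/- For any positive integer r, there is no odd vector cycle in Z^2 of squared magnitude r; that is, there do not exist an odd positive integer n and vectors v_1, ..., v_n in Z^2, each with squared Euclidean norm r, with v_1 + ... + v_n = 0. (Equivalently, C_2(r) = 0 for all r.) -/
lemma zmod2_sq (x : ZMod 2) : x ^ 2 = x := by revert x; decide

lemma zmod2_eq_zero (a : ZMod 2) (h : a ≠ 1) : a = 0 := by revert a; decide

lemma zmod4_sq_zero (a b : ZMod 4) (h : a ^ 2 + b ^ 2 = 0) : a ^ 2 = 0 := by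
  revert a b; decide

lemma zmod4_no_two (b : ZMod 4) : b ^ 2 ≠ 2 := by revert b; decide

-- parity of x + y from x² + y² = r
lemma parity_sum (x y : ℤ) (r : ℕ) (h : x ^ 2 + y ^ 2 = (r : ℤ)) :
    (x : ZMod 2) + (y : ZMod 2) = (r : ZMod 2) := by
  have h2 := congrArg (Int.cast : ℤ → ZMod 2) h
  push_cast at h2
  rw [zmod2_sq, zmod2_sq] at h2
  exact h2

-- If x² + y² ≡ 2 (mod 4), then x is odd.
lemma odd_of_mod4_two (x y : ℤ) (r : ℕ) (h : x ^ 2 + y ^ 2 = (r : ℤ))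
    (h4 : r % 4 = 2) : (x : ZMod 2) = 1 := by
  by_contra hx
  have hx0 : (x : ZMod 2) = 0 := zmod2_eq_zero _ hx
  have hdvd : (2 : ℤ) ∣ x := by
    exact_mod_cast (ZMod.intCast_zmod_eq_zero_iff_dvd x 2).mp hx0
  obtain ⟨a, rfl⟩ := hdvd
  have h2 := congrArg (Int.cast : ℤ → ZMod 4) h
  push_cast at h2
  have hr4 : ((r : ℕ) : ZMod 4) = 2 := by
    obtain ⟨q, hq⟩ : ∃ q, r = 4 * q + 2 := ⟨r / 4, by omega⟩
    subst hq; push_cast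
    rw [show ((4 : ZMod 4)) = 0 from by decide]; ring
  have : ((y : ZMod 4)) ^ 2 = 2 := by
    rw [hr4] at h2
    have h40 : ((2 : ZMod 4) * a) ^ 2 = 0 := by ring_nf; simp [show ((4:ZMod 4)) = 0 by decide]
    calc ((y : ZMod 4)) ^ 2 = (2 * (a : ZMod 4)) ^ 2 + (y : ZMod 4) ^ 2 - (2 * a) ^ 2 := by ring
    _ = 2 := by rw [h2]; rw [show ((2 : ZMod 4) * (a : ZMod 4)) ^ 2 = 0 from h40]; ring
  exact zmod4_no_two _ this

-- If x² + y² ≡ 0 (mod 4), then x is even.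
lemma even_of_mod4_zero (x y : ℤ) (r : ℕ) (h : x ^ 2 + y ^ 2 = (r : ℤ))
    (h4 : r % 4 = 0) : (2 : ℤ) ∣ x := by
  have h2 := congrArg (Int.cast : ℤ → ZMod 4) h
  push_cast at h2
  have hr4 : ((r : ℕ) : ZMod 4) = 0 := by
    obtain ⟨k, rfl⟩ : 4 ∣ r := Nat.dvd_of_mod_eq_zero h4
    push_cast
    rw [show ((4 : ZMod 4)) = 0 from by decide]; ring
  rw [hr4] at h2
  have hsq : ((x : ZMod 4)) ^ 2 = 0 := zmod4_sq_zero _ _ h2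
  have : (4 : ℤ) ∣ x ^ 2 := by
    have := (ZMod.intCast_zmod_eq_zero_iff_dvd (x ^ 2) 4).mp (by push_cast; exact hsq)
    exact_mod_cast this
  have h2x : (2 : ℤ) ∣ x ^ 2 := dvd_trans (by norm_num) this
  exact Int.prime_two.dvd_of_dvd_pow h2x

lemma aux_no_cycle : ∀ r : ℕ, 0 < r → ¬ ∃ (n : ℕ), Odd n ∧ 0 < n ∧
      ∃ v : Fin n → (Fin 2 → ℤ),
        (∀ i, ∑ j, (v i j) ^ 2 = (r : ℤ)) ∧ (∑ i, v i) = 0 := by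
  intro r
  induction r using Nat.strong_induction_on with
  | _ r IH =>
  rintro hr ⟨n, hn, hnpos, v, hnorm, hsum⟩
  obtain ⟨k, hk⟩ := hn
  have hsumc : ∀ j, ∑ i, v i j = 0 := by
    intro j
    have := congrFun hsum j
    simpa using this
  have hnorm' : ∀ i, (v i 0) ^ 2 + (v i 1) ^ 2 = (r : ℤ) := by
    intro i; have := hnorm i; rwa [Fin.sum_univ_two] at this
  have hcases : r % 2 = 1 ∨ r % 4 = 2 ∨ r % 4 = 0 := by omega
  -- a helper for deriving a contradiction from "each entry is 1 mod 2, sum is 0"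
  have sum_contra : ∀ f : Fin n → ℤ, (∀ i, (f i : ZMod 2) = 1) → (∑ i, f i) = 0 → False := by
    intro f hf hs
    have h0 : ((∑ i, f i : ℤ) : ZMod 2) = 0 := by rw [hs]; simp
    rw [Int.cast_sum] at h0
    have : (∑ i : Fin n, ((f i : ZMod 2))) = (n : ZMod 2) := by
      rw [Finset.sum_congr rfl (fun i _ => hf i)]
      simp [Finset.card_univ]
    rw [this] at h0
    rw [hk] at h0
    push_cast at h0
    simp [show ((2:ZMod 2)) = 0 by decide] at h0
  rcases hcases with h1 | h2 | h0
  · -- r odd : x + y odd for each vector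
    apply sum_contra (fun i => v i 0 + v i 1)
    · intro i
      have := parity_sum _ _ _ (hnorm' i)
      have hr2 : ((r : ℕ) : ZMod 2) = 1 := by
        obtain ⟨q, hq⟩ : ∃ q, r = 2 * q + 1 := ⟨r / 2, by omega⟩
        subst hq; push_cast
        rw [show ((2 : ZMod 2)) = 0 from by decide]; ring
      push_cast
      rw [this]
      exact hr2
    · rw [Finset.sum_add_distrib, hsumc 0, hsumc 1]; ring
  · -- r ≡ 2 mod 4 : each x odd
    apply sum_contra (fun i => v i 0)
    · intro i; exact odd_of_mod4_two _ _ _ (hnorm' i) h2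
    · exact hsumc 0
  · -- r ≡ 0 mod 4 : descent
    have heven : ∀ i j, (2 : ℤ) ∣ v i j := by
      intro i j
      fin_cases j
      · exact even_of_mod4_zero _ _ _ (hnorm' i) h0
      · have h' : (v i 1) ^ 2 + (v i 0) ^ 2 = (r : ℤ) := by linarith [hnorm' i]
        exact even_of_mod4_zero _ _ _ h' h0
    set w : Fin n → (Fin 2 → ℤ) := fun i j => v i j / 2 with hw
    have hvw : ∀ i j, v i j = 2 * w i j := by
      intro i j
      exact (Int.mul_ediv_cancel' (heven i j)).symm
    have hrdvd : 4 ∣ r := Nat.dvd_of_mod_eq_zero h0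
    obtain ⟨s, hs⟩ := hrdvd
    have hspos : 0 < s := by omega
    have hslt : s < r := by omega
    apply IH s hslt hspos
    refine ⟨n, ⟨k, hk⟩, hnpos, w, ?_, ?_⟩
    · intro i
      have hv := hnorm' i
      rw [hvw i 0, hvw i 1] at hv
      have : 4 * ((w i 0) ^ 2 + (w i 1) ^ 2) = 4 * (s : ℤ) := by
        rw [hs] at hv; push_cast at hv ⊢; linarith
      have h4 : ((w i 0) ^ 2 + (w i 1) ^ 2) = (s : ℤ) := by linarith
      rw [Fin.sum_univ_two]; exact h4
    · funext j
      have h2s : 2 * (∑ i, w i j) = 0 := by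
        rw [Finset.mul_sum]
        rw [← hsumc j]
        exact Finset.sum_congr rfl (fun i _ => (hvw i j).symm)
      have : (∑ i, w i j) = 0 := by linarith
      simpa using this

/-- For any positive integer `r`, there is no odd vector cycle in `ℤ²`
of squared magnitude `r`. -/
theorem no_odd_vector_cycle_in_Z2 (r : ℕ) (hr : 0 < r) :
    ¬ ∃ (n : ℕ), Odd n ∧ 0 < n ∧
      ∃ v : Fin n → (Fin 2 → ℤ),
        (∀ i, ∑ j, (v i j) ^ 2 = (r : ℤ)) ∧ (∑ i, v i) = 0 :=
  aux_no_cycle r hr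
end

section
/- Let m and r be positive integers with r even and m >= 4. Then the complete graph K_4 appears in G(Z^m, sqrt(r)); that is, there exist four points P_1, P_2, P_3, P_4 in Z^m such that the squared Euclidean distance between every pair of distinct points equals r. -/
/-- Rows of the quaternion-based `K₄` configuration: the four points
`0, q(1+i), q(1+j), q(1+k)` for `q = A + Bi + Cj + Dk`. -/
def K4rows (A B C D : ℤ) : Fin 4 → Fin 4 → ℤ :=
  ![![0, 0, 0, 0],
    ![A - B, A + B, C + D, D - C],
    ![A - C, B - D, A + C, B + D],
    ![A - D, B + C, C - B, A + D]]

/-- The configuration extended by zeros to all of `ℕ`. -/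
def K4pt (A B C D : ℤ) (i : Fin 4) (n : ℕ) : ℤ :=
  if h : n < 4 then K4rows A B C D i ⟨n, h⟩ else 0

/-- For `m ≥ 4` and `r` an even positive integer, the complete graph `K₄`
appears in `G(ℤ^m, √r)`: there exist four points of `ℤ^m` with every pair of distinct
points at squared Euclidean distance `r`. -/
theorem K4_subgraph_of_Zm (m r : ℕ) (hm : 4 ≤ m) (hr : 0 < r) (hreven : Even r) :
    ∃ P : Fin 4 → (Fin m → ℤ),
      ∀ i j : Fin 4, i ≠ j → ∑ k, (P i k - P j k) ^ 2 = (r : ℤ) := by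
  obtain ⟨s, hs⟩ := hreven
  obtain ⟨a, b, c, d, habcd⟩ := Nat.sum_four_squares s
  set A := (a : ℤ) with hA; set B := (b : ℤ) with hB
  set C := (c : ℤ) with hC; set D := (d : ℤ) with hD
  have hS : A ^ 2 + B ^ 2 + C ^ 2 + D ^ 2 = (s : ℤ) := by
    rw [hA, hB, hC, hD]; exact_mod_cast congrArg (fun n : ℕ => (n : ℤ)) habcd
  have hrs : (r : ℤ) = 2 * (s : ℤ) := by
    have h : r = s + s := hs
    push_cast [h]; ring
  set Q : Fin 4 → ℕ → ℤ := K4pt A B C D with hQdef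
  have hQ0 : ∀ (i : Fin 4) (n : ℕ), 4 ≤ n → Q i n = 0 := by
    intro i n hn
    simp [hQdef, K4pt, dif_neg (not_lt.2 hn)]
  refine ⟨fun i k => Q i k.val, ?_⟩
  intro i j hij
  have key : (∑ k : Fin m, (Q i k.val - Q j k.val) ^ 2) =
      ∑ n ∈ Finset.range 4, (Q i n - Q j n) ^ 2 := by
    rw [Fin.sum_univ_eq_sum_range (fun n => (Q i n - Q j n) ^ 2) m]
    refine (Finset.sum_subset (Finset.range_subset_range.2 hm) ?_).symm
    intro n _ hn
    rw [Finset.mem_range, not_lt] at hn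
    rw [hQ0 i n hn, hQ0 j n hn]; ring
  rw [key, Finset.sum_range_succ, Finset.sum_range_succ, Finset.sum_range_succ,
    Finset.sum_range_one, hrs]
  fin_cases i <;> fin_cases j <;>
    first
      | exact absurd rfl hij
      | (simp only [hQdef, K4pt, K4rows]
         norm_num [Matrix.cons_val_zero, Matrix.cons_val_one, Matrix.head_cons]
         linear_combination 2 * hS)
end

section
/- Let m and r be positive integers with r even and m >= 4. Then C_m(r) = 3; that is, there exist three vectors in Z^m, each with squared Euclidean norm r, summing to the zero vector, and no single vector of squared Euclidean norm r equals the zero vector (so 3 is the minimum odd length of a vector cycle). -/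
private def vv4 (c0 c1 c2 c3 : ℤ) : ℕ → ℤ :=
  fun k => if k = 0 then c0 else if k = 1 then c1 else if k = 2 then c2 else
    if k = 3 then c3 else 0

private lemma sum_fin_of_supp4 (m : ℕ) (hm : 4 ≤ m) (h : ℕ → ℤ)
    (hz : ∀ k, 4 ≤ k → h k = 0) :
    ∑ j : Fin m, h j.val = h 0 + h 1 + h 2 + h 3 := by
  rw [Fin.sum_univ_eq_sum_range]
  rw [← Finset.sum_subset (Finset.range_subset_range.2 hm)]
  · simp [Finset.sum_range_succ]
  · intro k _ hk
    exact hz k (by simpa using hk)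

private lemma norm_vv4 (m : ℕ) (hm : 4 ≤ m) (a b c d : ℤ) :
    ∑ j : Fin m, (vv4 a b c d j.val) ^ 2 = a ^ 2 + b ^ 2 + c ^ 2 + d ^ 2 := by
  have := sum_fin_of_supp4 m hm (fun k => (vv4 a b c d k) ^ 2)
    (by intro k hk; simp only [vv4]; split_ifs <;> simp_all)
  simpa [vv4] using this

/-- For `m ≥ 4` and `r` an even positive integer, `C_m(r) = 3`: there exist
three vectors in `ℤ^m`, each of squared norm `r`, summing to the zero vector, and no single
vector of squared norm `r` is the zero vector (so 3 is the minimum odd cycle length). -/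
theorem C_eq_three_of_dim_ge_four (m r : ℕ) (hm : 4 ≤ m) (hr : 0 < r) (hreven : Even r) :
    (∃ v : Fin 3 → (Fin m → ℤ),
      (∀ i, ∑ j, (v i j) ^ 2 = (r : ℤ)) ∧ (∑ i, v i) = 0) ∧
    ¬ ∃ w : Fin m → ℤ, (∑ j, (w j) ^ 2 = (r : ℤ)) ∧ w = 0 := by
  obtain ⟨s, hs⟩ := hreven
  obtain ⟨p, q, t, u, hpqtu⟩ := Nat.sum_four_squares s
  have hpz : ((p : ℤ))^2 + (q : ℤ)^2 + (t : ℤ)^2 + (u : ℤ)^2 = (s : ℤ) := by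
    exact_mod_cast hpqtu
  have hr' : (r : ℤ) = (s : ℤ) + (s : ℤ) := by exact_mod_cast hs
  set P := (p : ℤ); set Q := (q : ℤ); set T := (t : ℤ); set U := (u : ℤ)
  constructor
  · refine ⟨![fun j => vv4 (P - Q) (P + Q) (T + U) (U - T) j.val,
        fun j => vv4 (-P - T) (-Q - U) (P - T) (Q - U) j.val,
        fun j => vv4 (Q + T) (U - P) (-P - U) (T - Q) j.val], ?_, ?_⟩
    · intro i
      fin_cases i
      · show ∑ j : Fin m, (vv4 (P - Q) (P + Q) (T + U) (U - T) j.val) ^ 2 = (r : ℤ)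
        rw [norm_vv4 m hm, hr']; linear_combination 2 * hpz
      · show ∑ j : Fin m, (vv4 (-P - T) (-Q - U) (P - T) (Q - U) j.val) ^ 2 = (r : ℤ)
        rw [norm_vv4 m hm, hr']; linear_combination 2 * hpz
      · show ∑ j : Fin m, (vv4 (Q + T) (U - P) (-P - U) (T - Q) j.val) ^ 2 = (r : ℤ)
        rw [norm_vv4 m hm, hr']; linear_combination 2 * hpz
    · funext j
      rw [Fin.sum_univ_three]
      simp only [Matrix.cons_val_zero, Matrix.cons_val_one, Matrix.head_cons,
        Matrix.cons_val_two, Matrix.tail_cons, Pi.add_apply, Pi.zero_apply, vv4]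
      split_ifs <;> ring
  · rintro ⟨w, hw, rfl⟩
    simp at hw
    omega
end

section
/- Let s be a positive integer with s congruent to 2 modulo 4 whose square-free part contains no odd prime factor congruent to 2 modulo 3. Then C_3(s) = 3; that is, there exist three vectors in Z^3, each with squared Euclidean norm s, summing to the zero vector. -/
/-!
Write `s = 2m` with `m` odd. Every prime `p ≡ 2 (mod 3)` divides `m` to an even power, so `m` is
a norm `a² + ab + b²` of an Eisenstein integer: `3 = 1 + 1 + 1`, `p²` is trivially a norm, and a
prime `p ≡ 1 (mod 3)` is a norm because a cube root of unity `z` mod `p` and Thue's lemma give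
small `x ≡ zy (mod p)`, whence `p ∣ x² + xy + y² < 3p`, and the form never takes the value `2p`
modulo 4. The cyclic shifts of `(a, b, -a - b)` then have squared norm `2(a² + ab + b²) = s` and
sum to zero.
-/

theorem FiniteField.exists_sq_add_self_add_one_eq_zero {F : Type*} [Field F] [Finite F]
    (h : Nat.card F % 3 = 1) : ∃ z : F, z ^ 2 + z + 1 = 0 := by
  have : Fact (Nat.Prime 3) := ⟨Nat.prime_three⟩
  obtain ⟨g, hg⟩ := exists_prime_orderOf_dvd_card' (G := Fˣ) 3
    (by rw [Nat.card_units]; omega)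
  have hζ : IsPrimitiveRoot (g : F) 3 := IsPrimitiveRoot.coe_units_iff.mpr (hg ▸ .orderOf g)
  refine ⟨g, ?_⟩
  simpa [Finset.sum_range_succ, add_comm, add_left_comm, add_assoc, sq] using
    hζ.geom_sum_eq_zero (by norm_num)

theorem sq_add_mul_add_sq_ne_two_mul_odd (a b k : ℤ) :
    a ^ 2 + a * b + b ^ 2 ≠ 2 * (2 * k + 1) := by
  intro h
  have h4 := congrArg (Int.cast : ℤ → ZMod 4) h
  push_cast at h4
  generalize (a : ZMod 4) = a at h4
  generalize (b : ZMod 4) = b at h4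
  generalize (k : ZMod 4) = k at h4
  revert a b k
  decide

/-- Thue's lemma. -/
theorem ZMod.exists_abs_le_sqrt_intCast_eq_mul (n : ℕ) [NeZero n] (r : ZMod n) :
    ∃ x y : ℤ, (x ≠ 0 ∨ y ≠ 0) ∧ |x| ≤ n.sqrt ∧ |y| ≤ n.sqrt ∧ (x : ZMod n) = r * y := by
  set k := n.sqrt
  have hcard : Fintype.card (ZMod n) < Fintype.card (Fin (k + 1) × Fin (k + 1)) := by
    simpa [ZMod.card, sq] using Nat.lt_succ_sqrt' n
  obtain ⟨u, v, huv, hf⟩ := Fintype.exists_ne_map_eq_of_card_lt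
    (fun ab : Fin (k + 1) × Fin (k + 1) => ((ab.1 : ℕ) : ZMod n) - r * ((ab.2 : ℕ) : ZMod n))
    hcard
  have := u.1.isLt
  have := u.2.isLt
  have := v.1.isLt
  have := v.2.isLt
  refine ⟨(u.1 : ℕ) - (v.1 : ℕ), (u.2 : ℕ) - (v.2 : ℕ), ?_, ?_, ?_, ?_⟩
  · by_contra! h
    exact huv (Prod.ext (Fin.ext (by omega)) (Fin.ext (by omega)))
  · rw [abs_le]; omega
  · rw [abs_le]; omega
  · push_cast
    linear_combination hf

/-- Multiplicativity is that of the Eisenstein norm: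
`(a - bω)(c - dω) = (ac - bd) - (ad + bc + bd)ω` when `ω² + ω + 1 = 0`. -/
def loeschian : Submonoid ℕ where
  carrier := {n | ∃ a b : ℤ, a ^ 2 + a * b + b ^ 2 = n}
  one_mem' := ⟨1, 0, by norm_num⟩
  mul_mem' := by
    rintro m n ⟨a, b, hm⟩ ⟨c, d, hn⟩
    exact ⟨a * c - b * d, a * d + b * c + b * d, by push_cast; rw [← hm, ← hn]; ring⟩

theorem mem_loeschian {n : ℕ} : n ∈ loeschian ↔ ∃ a b : ℤ, a ^ 2 + a * b + b ^ 2 = n := Iff.rfl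

theorem sq_mem_loeschian (n : ℕ) : n ^ 2 ∈ loeschian := ⟨n, 0, by push_cast; ring⟩

theorem Nat.Prime.mem_loeschian_of_mod_three_eq_one {p : ℕ} (hp : p.Prime) (h3 : p % 3 = 1) :
    p ∈ loeschian := by
  have : Fact p.Prime := ⟨hp⟩
  obtain ⟨z, hz⟩ := 
    FiniteField.exists_sq_add_self_add_one_eq_zero (F := ZMod p) (by simpa using h3)
  obtain ⟨x, y, hxy, hx, hy, hxz⟩ := ZMod.exists_abs_le_sqrt_intCast_eq_mul p z
  have hsqrt : (p.sqrt : ℤ) * p.sqrt < p := by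
    have : p.sqrt * p.sqrt < p := (Nat.sqrt_le p).lt_of_ne fun h ↦
      hp.prime.not_isSquare ⟨_, h.symm⟩
    exact_mod_cast this
  rw [abs_le] at hx hy
  have hdvd : (p : ℤ) ∣ x ^ 2 + x * y + y ^ 2 := by
    rw [← ZMod.intCast_zmod_eq_zero_iff_dvd]
    push_cast
    rw [hxz]
    linear_combination (y : ZMod p) ^ 2 * hz
  obtain ⟨d, hd⟩ := hdvd
  have hpos : 0 < x ^ 2 + x * y + y ^ 2 := by
    rcases hxy with h | h
    · nlinarith [sq_pos_of_ne_zero h, sq_nonneg (x + 2 * y)]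
    · nlinarith [sq_pos_of_ne_zero h, sq_nonneg (2 * x + y)]
  have hlt : x ^ 2 + x * y + y ^ 2 < 3 * p := by nlinarith
  have hp0 : (0 : ℤ) < p := by exact_mod_cast hp.pos
  obtain rfl | rfl : d = 1 ∨ d = 2 := by
    have : 0 < d := by nlinarith
    have : d < 3 := by nlinarith
    omega
  · exact ⟨x, y, by rw [hd, mul_one]⟩
  · obtain ⟨k, hk⟩ := hp.odd_of_ne_two (by omega)
    exact absurd (by rw [hd, hk]; push_cast; ring) (sq_add_mul_add_sq_ne_two_mul_odd x y k)

theorem mem_loeschian_of_even_factorization {n : ℕ}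
    (h : ∀ p : ℕ, p.Prime → p % 3 = 2 → Even (n.factorization p)) : n ∈ loeschian := by
  rcases eq_or_ne n 0 with rfl | hn
  · exact ⟨0, 0, by norm_num⟩
  rw [← Nat.prod_factorization_pow_eq_self hn]
  refine SubmonoidClass.finsuppProd_mem _ _ _ fun p hpn ↦ ?_
  have hp : p.Prime := Nat.prime_of_mem_primeFactors (Finsupp.mem_support_iff.mpr hpn)
  obtain h0 | h1 | h2 : p % 3 = 0 ∨ p % 3 = 1 ∨ p % 3 = 2 := by omega
  · obtain rfl : p = 3 := ((Nat.prime_dvd_prime_iff_eq Nat.prime_three hp).mp (by omega)).symm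
    exact pow_mem (mem_loeschian.mpr ⟨1, 1, by norm_num⟩) _
  · exact pow_mem (hp.mem_loeschian_of_mod_three_eq_one h1) _
  · obtain ⟨k, hk⟩ := h p hp h2
    rw [hk, ← two_mul, pow_mul']
    exact sq_mem_loeschian _

theorem exists_three_vectors_sum_eq_zero (a b : ℤ) :
    ∃ v : Fin 3 → Fin 3 → ℤ,
      (∀ i, ∑ j, v i j ^ 2 = 2 * (a ^ 2 + a * b + b ^ 2)) ∧ ∑ i, v i = 0 := by
  refine ⟨![![a, b, -(a + b)], ![b, -(a + b), a], ![-(a + b), a, b]], fun i ↦ ?_, ?_⟩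
  · fin_cases i <;> simp [Fin.sum_univ_three] <;> ring
  · funext j
    fin_cases j <;> simp [Fin.sum_univ_three]

theorem C3_eq_three_of_mem_S_general (s : ℕ) (hmod : s % 4 = 2)
    (hS : ∀ p : ℕ, p.Prime → p ≠ 2 → p % 3 = 2 → Even (s.factorization p)) :
    ∃ v : Fin 3 → (Fin 3 → ℤ),
      (∀ i, ∑ j, (v i j) ^ 2 = (s : ℤ)) ∧ (∑ i, v i) = 0 := by
  obtain ⟨m, rfl⟩ : ∃ m, s = 2 * m := ⟨s / 2, by omega⟩
  have hm : m ∈ loeschian := by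
    refine mem_loeschian_of_even_factorization fun p hp hp3 ↦ ?_
    rcases eq_or_ne p 2 with rfl | hp2
    · rw [Nat.factorization_eq_zero_of_not_dvd (by omega)]
      exact Even.zero
    · simpa [Nat.factorization_mul two_ne_zero (by omega : m ≠ 0),
        Nat.prime_two.factorization, Finsupp.single_apply, Ne.symm hp2] using hS p hp hp2 hp3
  obtain ⟨a, b, hab⟩ := hm
  obtain ⟨v, hv, hsum⟩ := exists_three_vectors_sum_eq_zero a b
  exact ⟨v, fun i ↦ by rw [hv, hab]; push_cast; ring, hsum⟩

/-- Let `s ≡ 2 (mod 4)` be a positive integer whose square-free part contains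
no odd prime factor congruent to 2 mod 3 (i.e. every prime `p ≠ 2` with `p ≡ 2 (mod 3)`
appears to an even power in `s`). Then `C₃(s) = 3`: there exist three vectors in `ℤ³`,
each of squared norm `s`, summing to the zero vector. -/
theorem C3_eq_three_of_mem_S (s : ℕ) (hs : 0 < s) (hmod : s % 4 = 2)
    (hS : ∀ p : ℕ, p.Prime → p ≠ 2 → p % 3 = 2 → Even (s.factorization p)) :
    ∃ v : Fin 3 → (Fin 3 → ℤ),
      (∀ i, ∑ j, (v i j) ^ 2 = (s : ℤ)) ∧ (∑ i, v i) = 0 :=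
  C3_eq_three_of_mem_S_general s hmod hS
end

section
/- Let t be a positive integer with t congruent to 2 modulo 4 whose square-free part contains at least one odd prime factor congruent to 2 modulo 3. Then C_3(t) >= 5; in particular, there do not exist three vectors in Z^3, each with squared Euclidean norm t, summing to the zero vector. -/
/-- `-3` is not a square mod `p` when `p ≡ 2 (mod 3)` is an odd prime. -/
theorem aux_no_sqrt_neg3 (p : ℕ) (hp : p.Prime) (hp2 : p ≠ 2) (hp3 : p % 3 = 2)
    (x : ZMod p) (hx : x^2 = -3) : False := by
  haveI : Fact p.Prime := ⟨hp⟩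
  have h2 : (2 : ZMod p) ≠ 0 := by
    intro h
    exact hp2 ((Nat.prime_dvd_prime_iff_eq hp Nat.prime_two).mp
      ((ZMod.natCast_eq_zero_iff 2 p).mp (by exact_mod_cast h)))
  have h3 : (3 : ZMod p) ≠ 0 := by
    intro h
    have : p = 3 := (Nat.prime_dvd_prime_iff_eq hp Nat.prime_three).mp
      ((ZMod.natCast_eq_zero_iff 3 p).mp (by exact_mod_cast h))
    omega
  set y : ZMod p := (x - 1) * (2 : ZMod p)⁻¹ with hy_def
  have h2y : 2 * y = x - 1 := by
    rw [hy_def]; field_simp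
  have hy : y^2 + y + 1 = 0 := by
    have h4 : (4 : ZMod p) * (y^2+y+1) = (2*y+1)^2 + 3 := by ring
    rw [h2y] at h4
    have h40 : (4 : ZMod p) ≠ 0 := by
      intro h; apply h2
      have : (2 : ZMod p) * 2 = 0 := by rw [show (2:ZMod p)*2 = 4 by norm_num, h]
      rcases mul_eq_zero.mp this with h | h <;> exact h
    have : (x - 1 + 1)^2 + 3 = x^2 + 3 := by ring
    rw [this, hx] at h4
    have : (4 : ZMod p) * (y^2+y+1) = 4 * 0 := by rw [h4]; ring
    exact mul_left_cancel₀ h40 this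
  have hy1 : y ≠ 1 := by
    intro h; rw [h] at hy; apply h3; linear_combination hy
  have hy0 : y ≠ 0 := by
    intro h; rw [h] at hy
    exact one_ne_zero (by linear_combination hy)
  have hy3 : y^3 = 1 := by linear_combination (y - 1) * hy
  have hord : orderOf y = 3 := by
    have hdvd : orderOf y ∣ 3 := orderOf_dvd_of_pow_eq_one hy3
    rcases (Nat.dvd_prime Nat.prime_three).mp hdvd with h | h
    · exact absurd (orderOf_eq_one_iff.mp h) hy1
    · exact h
  have hcard : orderOf y ∣ p - 1 := ZMod.orderOf_dvd_card_sub_one hy0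
  rw [hord] at hcard
  have := hp.two_le
  omega

/-- If `p ≡ 2 (mod 3)` is an odd prime dividing `3a² + b²`, then `p ∣ a` and `p ∣ b`. -/
theorem aux_base_dvd (p : ℕ) (hp : p.Prime) (hp2 : p ≠ 2) (hp3 : p % 3 = 2)
    (a b : ℤ) (h : (p:ℤ) ∣ 3*a^2 + b^2) : (p:ℤ) ∣ a ∧ (p:ℤ) ∣ b := by
  haveI : Fact p.Prime := ⟨hp⟩
  have h0 : ((3*a^2 + b^2 : ℤ) : ZMod p) = 0 := (ZMod.intCast_zmod_eq_zero_iff_dvd _ p).mpr h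
  push_cast at h0
  have hA : (a : ZMod p) = 0 := by
    by_contra hA
    exact aux_no_sqrt_neg3 p hp hp2 hp3 ((b : ZMod p) * (a : ZMod p)⁻¹) (by
      field_simp
      linear_combination h0)
  have hB : (b : ZMod p) = 0 := by
    have : ((b : ZMod p))^2 = 0 := by rw [hA] at h0; linear_combination h0
    exact pow_eq_zero_iff (n := 2) (by norm_num) |>.mp this
  exact ⟨(ZMod.intCast_zmod_eq_zero_iff_dvd _ p).mp hA,
    (ZMod.intCast_zmod_eq_zero_iff_dvd _ p).mp hB⟩

/-- Descent: the `p`-adic valuation of `3a² + b²` is even (divisibility form). -/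
theorem aux_descentE (p : ℕ) (hp : p.Prime) (hp2 : p ≠ 2) (hp3 : p % 3 = 2) :
    ∀ k : ℕ, ∀ a b : ℤ, (p:ℤ)^(2*k+1) ∣ 3*a^2 + b^2 →
      (p:ℤ)^(k+1) ∣ a ∧ (p:ℤ)^(k+1) ∣ b := by
  intro k
  induction k with
  | zero =>
    intro a b h
    simpa using aux_base_dvd p hp hp2 hp3 a b (by simpa using h)
  | succ k ih =>
    intro a b h
    have hp1 : (p:ℤ) ∣ 3*a^2+b^2 := dvd_trans (dvd_pow_self _ (by omega)) h
    obtain ⟨⟨a', rfl⟩, ⟨b', rfl⟩⟩ := aux_base_dvd p hp hp2 hp3 a b hp1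
    have hne : ((p:ℤ)^2) ≠ 0 := pow_ne_zero _ (by exact_mod_cast hp.ne_zero)
    have h' : (p:ℤ)^(2*k+1) ∣ 3*a'^2 + b'^2 := by
      have : (p:ℤ)^2 * ((p:ℤ)^(2*k+1)) ∣ (p:ℤ)^2 * (3*a'^2+b'^2) := by
        have e1 : (p:ℤ)^2 * ((p:ℤ)^(2*k+1)) = (p:ℤ)^(2*(k+1)+1) := by ring
        have e2 : (p:ℤ)^2 * (3*a'^2+b'^2) = 3*((p:ℤ)*a')^2 + ((p:ℤ)*b')^2 := by ring
        rw [e1, e2]; exact h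
      exact (mul_dvd_mul_iff_left hne).mp this
    obtain ⟨ha, hb⟩ := ih a' b' h'
    constructor
    · rw [show (p:ℤ)^(k+1+1) = (p:ℤ) * (p:ℤ)^(k+1) by ring]
      exact mul_dvd_mul_left _ ha
    · rw [show (p:ℤ)^(k+1+1) = (p:ℤ) * (p:ℤ)^(k+1) by ring]
      exact mul_dvd_mul_left _ hb

/-- The Gram-determinant identity at the first coordinate, for an orthogonal pair
of vectors with squared norms `t` and `3t`. -/
theorem aux_coordId (t a1 a2 a3 b1 b2 b3 : ℤ) (h1 : a1^2+a2^2+a3^2 = t)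
    (h2 : b1^2+b2^2+b3^2 = 3*t) (h3 : a1*b1+a2*b2+a3*b3 = 0) :
    t*(3*a1^2+b1^2) + (a2*b3-a3*b2)^2 = 3*t^2 := by
  linear_combination (b2^2+b3^2)*h1 + (t - a1^2)*h2 + (a1*b1 - a2*b2 - a3*b3)*h3

/-- Upgrade divisibility at a coordinate where `p ∤ 3x² + y²`. -/
theorem aux_caseB (p : ℕ) (hp : p.Prime) (hp2 : p ≠ 2) (hp3 : p % 3 = 2)
    (k : ℕ) (t x y e : ℤ)
    (hid : t*(3*x^2+y^2) + e^2 = 3*t^2)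
    (hnd : ¬ (p:ℤ) ∣ (3*x^2+y^2))
    (hdvd : (p:ℤ)^(2*k+1) ∣ t) : (p:ℤ)^(2*k+2) ∣ t := by
  have ht2 : (p:ℤ)^(2*k+2) ∣ 3*t^2 := by
    have : (p:ℤ)^(2*k+1) * (p:ℤ)^(2*k+1) ∣ t * t := mul_dvd_mul hdvd hdvd
    have h42 : (p:ℤ)^(2*k+2) ∣ t * t := by
      refine dvd_trans (pow_dvd_pow _ (show 2*k+2 ≤ 2*k+1+(2*k+1) by omega)) ?_
      rwa [← pow_add] at this
    exact Dvd.dvd.mul_left (by rwa [← sq] at h42) 3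
  have he2 : (p:ℤ)^(2*k+1) ∣ e^2 := by
    have hd1 : (p:ℤ)^(2*k+1) ∣ t*(3*x^2+y^2) := hdvd.mul_right _
    have hd2 : (p:ℤ)^(2*k+1) ∣ 3*t^2 := dvd_trans (pow_dvd_pow _ (by omega)) ht2
    have : e^2 = 3*t^2 - t*(3*x^2+y^2) := by linarith
    rw [this]; exact dvd_sub hd2 hd1
  have he : (p:ℤ)^(k+1) ∣ e :=
    (aux_descentE p hp hp2 hp3 k 0 e (by simpa using he2)).2
  have he2' : (p:ℤ)^(2*k+2) ∣ e^2 := by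
    have := mul_dvd_mul he he
    rwa [← pow_add, ← sq, show k+1+(k+1) = 2*k+2 by ring] at this
  have hX : (p:ℤ)^(2*k+2) ∣ t*(3*x^2+y^2) := by
    have : t*(3*x^2+y^2) = 3*t^2 - e^2 := by linarith
    rw [this]; exact dvd_sub ht2 he2'
  have hcop : IsCoprime ((p:ℤ)^(2*k+2)) (3*x^2+y^2) :=
    ((Nat.prime_iff_prime_int.mp hp).coprime_iff_not_dvd.mpr hnd).pow_left
  exact hcop.dvd_of_dvd_mul_right hX

/-- Main descent: an orthogonal pair with squared norms `t` and `3t` forces the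
`p`-adic valuation of `t` to be even. -/
theorem aux_descentM (p : ℕ) (hp : p.Prime) (hp2 : p ≠ 2) (hp3 : p % 3 = 2) :
    ∀ k : ℕ, ∀ t a1 a2 a3 b1 b2 b3 : ℤ,
      a1^2+a2^2+a3^2 = t → b1^2+b2^2+b3^2 = 3*t → a1*b1+a2*b2+a3*b3 = 0 →
      (p:ℤ)^(2*k+1) ∣ t → (p:ℤ)^(2*k+2) ∣ t := by
  intro k
  induction k with
  | zero =>
    intro t a1 a2 a3 b1 b2 b3 h1 h2 h3 hdvd
    by_cases hall : (p:ℤ) ∣ a1 ∧ (p:ℤ) ∣ a2 ∧ (p:ℤ) ∣ a3 ∧ (p:ℤ) ∣ b1 ∧ (p:ℤ) ∣ b2 ∧ (p:ℤ) ∣ b3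
    · obtain ⟨⟨a1', rfl⟩, ⟨a2', rfl⟩, ⟨a3', rfl⟩, -, -, -⟩ := hall
      exact ⟨a1'^2+a2'^2+a3'^2, by rw [← h1]; ring⟩
    · rcases not_and_or.mp hall with h | hrest
      · exact aux_caseB p hp hp2 hp3 0 t a1 b1 (a2*b3-a3*b2)
          (aux_coordId t a1 a2 a3 b1 b2 b3 h1 h2 h3)
          (fun hd => h (aux_base_dvd p hp hp2 hp3 a1 b1 hd).1) hdvd
      rcases not_and_or.mp hrest with h | hrest
      · exact aux_caseB p hp hp2 hp3 0 t a2 b2 (a3*b1-a1*b3)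
          (aux_coordId t a2 a3 a1 b2 b3 b1 (by linarith) (by linarith) (by linarith))
          (fun hd => h (aux_base_dvd p hp hp2 hp3 a2 b2 hd).1) hdvd
      rcases not_and_or.mp hrest with h | hrest
      · exact aux_caseB p hp hp2 hp3 0 t a3 b3 (a1*b2-a2*b1)
          (aux_coordId t a3 a1 a2 b3 b1 b2 (by linarith) (by linarith) (by linarith))
          (fun hd => h (aux_base_dvd p hp hp2 hp3 a3 b3 hd).1) hdvd
      rcases not_and_or.mp hrest with h | hrest
      · exact aux_caseB p hp hp2 hp3 0 t a1 b1 (a2*b3-a3*b2)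
          (aux_coordId t a1 a2 a3 b1 b2 b3 h1 h2 h3)
          (fun hd => h (aux_base_dvd p hp hp2 hp3 a1 b1 hd).2) hdvd
      rcases not_and_or.mp hrest with h | h
      · exact aux_caseB p hp hp2 hp3 0 t a2 b2 (a3*b1-a1*b3)
          (aux_coordId t a2 a3 a1 b2 b3 b1 (by linarith) (by linarith) (by linarith))
          (fun hd => h (aux_base_dvd p hp hp2 hp3 a2 b2 hd).2) hdvd
      · exact aux_caseB p hp hp2 hp3 0 t a3 b3 (a1*b2-a2*b1)
          (aux_coordId t a3 a1 a2 b3 b1 b2 (by linarith) (by linarith) (by linarith))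
          (fun hd => h (aux_base_dvd p hp hp2 hp3 a3 b3 hd).2) hdvd
  | succ k ih =>
    intro t a1 a2 a3 b1 b2 b3 h1 h2 h3 hdvd
    by_cases hall : (p:ℤ) ∣ a1 ∧ (p:ℤ) ∣ a2 ∧ (p:ℤ) ∣ a3 ∧ (p:ℤ) ∣ b1 ∧ (p:ℤ) ∣ b2 ∧ (p:ℤ) ∣ b3
    · obtain ⟨⟨a1', rfl⟩, ⟨a2', rfl⟩, ⟨a3', rfl⟩, ⟨b1', rfl⟩, ⟨b2', rfl⟩, ⟨b3', rfl⟩⟩ := hall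
      have hpne : ((p:ℤ)^2) ≠ 0 := pow_ne_zero _ (by exact_mod_cast hp.ne_zero)
      set t' : ℤ := a1'^2+a2'^2+a3'^2 with ht'
      have h1' : (p:ℤ)^2 * t' = t := by rw [← h1]; ring
      have h2' : b1'^2+b2'^2+b3'^2 = 3*t' := by
        have : (p:ℤ)^2 * (b1'^2+b2'^2+b3'^2) = (p:ℤ)^2 * (3*t') := by
          rw [mul_comm ((p:ℤ)^2) (3*t')]
          calc (p:ℤ)^2 * (b1'^2+b2'^2+b3'^2)
              = ((p:ℤ)*b1')^2+((p:ℤ)*b2')^2+((p:ℤ)*b3')^2 := by ring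
            _ = 3*t := h2
            _ = 3*t' * (p:ℤ)^2 := by rw [← h1']; ring
        exact mul_left_cancel₀ hpne this
      have h3' : a1'*b1'+a2'*b2'+a3'*b3' = 0 := by
        apply mul_left_cancel₀ hpne
        calc (p:ℤ)^2 * (a1'*b1'+a2'*b2'+a3'*b3')
            = ((p:ℤ)*a1')*((p:ℤ)*b1')+((p:ℤ)*a2')*((p:ℤ)*b2')+((p:ℤ)*a3')*((p:ℤ)*b3') := by ring
          _ = 0 := h3
          _ = (p:ℤ)^2 * 0 := by ring
      have hdvd' : (p:ℤ)^(2*k+1) ∣ t' := by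
        have : (p:ℤ)^2 * (p:ℤ)^(2*k+1) ∣ (p:ℤ)^2 * t' := by
          rw [← pow_add, show 2+(2*k+1) = 2*(k+1)+1 by ring, h1']; exact hdvd
        exact (mul_dvd_mul_iff_left hpne).mp this
      have := ih t' a1' a2' a3' b1' b2' b3' rfl h2' h3' hdvd'
      rw [← h1']
      rw [show 2*(k+1)+2 = 2 + (2*k+2) by ring, pow_add]
      exact mul_dvd_mul_left _ this
    · rcases not_and_or.mp hall with h | hrest
      · exact aux_caseB p hp hp2 hp3 (k+1) t a1 b1 (a2*b3-a3*b2)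
          (aux_coordId t a1 a2 a3 b1 b2 b3 h1 h2 h3)
          (fun hd => h (aux_base_dvd p hp hp2 hp3 a1 b1 hd).1) hdvd
      rcases not_and_or.mp hrest with h | hrest
      · exact aux_caseB p hp hp2 hp3 (k+1) t a2 b2 (a3*b1-a1*b3)
          (aux_coordId t a2 a3 a1 b2 b3 b1 (by linarith) (by linarith) (by linarith))
          (fun hd => h (aux_base_dvd p hp hp2 hp3 a2 b2 hd).1) hdvd
      rcases not_and_or.mp hrest with h | hrest
      · exact aux_caseB p hp hp2 hp3 (k+1) t a3 b3 (a1*b2-a2*b1)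
          (aux_coordId t a3 a1 a2 b3 b1 b2 (by linarith) (by linarith) (by linarith))
          (fun hd => h (aux_base_dvd p hp hp2 hp3 a3 b3 hd).1) hdvd
      rcases not_and_or.mp hrest with h | hrest
      · exact aux_caseB p hp hp2 hp3 (k+1) t a1 b1 (a2*b3-a3*b2)
          (aux_coordId t a1 a2 a3 b1 b2 b3 h1 h2 h3)
          (fun hd => h (aux_base_dvd p hp hp2 hp3 a1 b1 hd).2) hdvd
      rcases not_and_or.mp hrest with h | h
      · exact aux_caseB p hp hp2 hp3 (k+1) t a2 b2 (a3*b1-a1*b3)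
          (aux_coordId t a2 a3 a1 b2 b3 b1 (by linarith) (by linarith) (by linarith))
          (fun hd => h (aux_base_dvd p hp hp2 hp3 a2 b2 hd).2) hdvd
      · exact aux_caseB p hp hp2 hp3 (k+1) t a3 b3 (a1*b2-a2*b1)
          (aux_coordId t a3 a1 a2 b3 b1 b2 (by linarith) (by linarith) (by linarith))
          (fun hd => h (aux_base_dvd p hp hp2 hp3 a3 b3 hd).2) hdvd

/-- Let `t ≡ 2 (mod 4)` be a positive integer whose square-free part contains
an odd prime factor congruent to 2 mod 3 (i.e. some prime `p ≠ 2` with `p ≡ 2 (mod 3)`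
appears to an odd power in `t`). Then `C₃(t) ≥ 5`: every odd vector cycle in `ℤ³` of
squared magnitude `t` has length at least 5; in particular there is no such cycle of
length three. -/
theorem C3_ge_five_of_mem_T (t : ℕ) (ht : 0 < t) (hmod : t % 4 = 2)
    (hT : ∃ p : ℕ, p.Prime ∧ p ≠ 2 ∧ p % 3 = 2 ∧ Odd (t.factorization p)) :
    (∀ n : ℕ, Odd n →
      (∃ v : Fin n → (Fin 3 → ℤ),
        (∀ i, ∑ j, (v i j) ^ 2 = (t : ℤ)) ∧ (∑ i, v i) = 0) → 5 ≤ n) ∧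
    ¬ ∃ v : Fin 3 → (Fin 3 → ℤ),
      (∀ i, ∑ j, (v i j) ^ 2 = (t : ℤ)) ∧ (∑ i, v i) = 0 := by
  obtain ⟨p, hp, hp2, hp3, hodd⟩ := hT
  have key : ¬ ∃ v : Fin 3 → (Fin 3 → ℤ),
      (∀ i, ∑ j, (v i j) ^ 2 = (t : ℤ)) ∧ (∑ i, v i) = 0 := by
    rintro ⟨v, hnorm, hsum⟩
    have hs : ∀ j : Fin 3, v 0 j + v 1 j + v 2 j = 0 := by
      intro j
      have := congrFun hsum j
      simpa [Fin.sum_univ_three] using this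
    have hn : ∀ i : Fin 3, (v i 0)^2 + (v i 1)^2 + (v i 2)^2 = (t:ℤ) := by
      intro i
      simpa [Fin.sum_univ_three] using hnorm i
    have h1 : (v 2 0)^2 + (v 2 1)^2 + (v 2 2)^2 = (t:ℤ) := hn 2
    have h2 : (v 0 0 - v 1 0)^2 + (v 0 1 - v 1 1)^2 + (v 0 2 - v 1 2)^2 = 3*(t:ℤ) := by
      linear_combination 2*(hn 0) + 2*(hn 1) - (hn 2)
        + (- v 0 0 - v 1 0 + v 2 0)*(hs 0) + (- v 0 1 - v 1 1 + v 2 1)*(hs 1)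
        + (- v 0 2 - v 1 2 + v 2 2)*(hs 2)
    have h3 : (v 2 0)*(v 0 0 - v 1 0) + (v 2 1)*(v 0 1 - v 1 1) + (v 2 2)*(v 0 2 - v 1 2) = 0 := by
      linear_combination (hn 1) - (hn 0)
        + (v 0 0 - v 1 0)*(hs 0) + (v 0 1 - v 1 1)*(hs 1) + (v 0 2 - v 1 2)*(hs 2)
    obtain ⟨k, hk⟩ := hodd
    have hdvd : (p:ℤ)^(2*k+1) ∣ (t:ℤ) := by
      have : p^(2*k+1) ∣ t := by
        rw [show 2*k+1 = t.factorization p by omega]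
        exact Nat.ordProj_dvd t p
      exact_mod_cast Int.natCast_dvd_natCast.mpr this
    have hM := aux_descentM p hp hp2 hp3 k (t:ℤ) (v 2 0) (v 2 1) (v 2 2)
      (v 0 0 - v 1 0) (v 0 1 - v 1 1) (v 0 2 - v 1 2) h1 h2 h3 hdvd
    have hnat : p^(2*k+2) ∣ t := by exact_mod_cast hM
    have hnot : ¬ p^(t.factorization p + 1) ∣ t := Nat.pow_succ_factorization_not_dvd ht.ne' hp
    rw [show t.factorization p + 1 = 2*k+2 by omega] at hnot
    exact hnot hnat
  refine ⟨?_, key⟩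
  intro n hn ⟨v, hnorm, hsum⟩
  by_contra hlt
  push_neg at hlt
  interval_cases n
  · exact (Nat.not_odd_iff_even.mpr Even.zero) hn
  · have h0 : v 0 = 0 := by
      simpa [Fin.sum_univ_one] using hsum
    have := hnorm 0
    rw [h0] at this
    simp [Fin.sum_univ_three] at this
    omega
  · exact (Nat.not_odd_iff_even.mpr (by decide)) hn
  · exact key ⟨v, hnorm, hsum⟩
  · exact (Nat.not_odd_iff_even.mpr (by decide)) hn
end

section
/- C_3(22) = 9; that is, every odd positive integer n for which there exist vectors v_1, ..., v_n in Z^3, each with squared Euclidean norm 22, summing to the zero vector satisfies n >= 9, and there exist nine vectors in Z^3, each with squared Euclidean norm 22, summing to the zero vector. -/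
lemma sq22 (a b c : ℤ) (h : a^2 + b^2 + c^2 = 22) :
    (a^2 = 4 ∧ b^2 = 9 ∧ c^2 = 9) ∨ (a^2 = 9 ∧ b^2 = 4 ∧ c^2 = 9) ∨
    (a^2 = 9 ∧ b^2 = 9 ∧ c^2 = 4) := by
  have ha1 : -4 ≤ a := by nlinarith [sq_nonneg b, sq_nonneg c]
  have ha2 : a ≤ 4 := by nlinarith [sq_nonneg b, sq_nonneg c]
  have hb1 : -4 ≤ b := by nlinarith [sq_nonneg a, sq_nonneg c]
  have hb2 : b ≤ 4 := by nlinarith [sq_nonneg a, sq_nonneg c]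
  have hc1 : -4 ≤ c := by nlinarith [sq_nonneg a, sq_nonneg b]
  have hc2 : c ≤ 4 := by nlinarith [sq_nonneg a, sq_nonneg b]
  interval_cases a <;> interval_cases b <;> interval_cases c <;> omega

lemma sq4 (a : ℤ) (h : a^2 = 4) : a = 2 ∨ a = -2 := by
  have h2 : (a - 2) * (a + 2) = 0 := by ring_nf; omega
  rcases mul_eq_zero.mp h2 with h | h <;> omega

lemma sq9 (a : ℤ) (h : a^2 = 9) : a = 3 ∨ a = -3 := by
  have h2 : (a - 3) * (a + 3) = 0 := by ring_nf; omega
  rcases mul_eq_zero.mp h2 with h | h <;> omega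

lemma not2 (a : ℤ) (h : a^2 = 9) : ¬(a = 2) ∧ ¬(a = -2) := by
  rcases sq9 a h with h' | h' <;> constructor <;> omega


/-- `C₃(22) = 9`: every odd `n` admitting vectors `v₁, …, vₙ ∈ ℤ³`, each of
squared norm 22, summing to zero, satisfies `n ≥ 9`, and nine such vectors exist. -/
theorem C3_22_eq_nine :
    (∀ n : ℕ, Odd n →
      (∃ v : Fin n → (Fin 3 → ℤ),
        (∀ i, ∑ j, (v i j) ^ 2 = (22 : ℤ)) ∧ (∑ i, v i) = 0) → 9 ≤ n) ∧
    (∃ v : Fin 9 → (Fin 3 → ℤ),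
      (∀ i, ∑ j, (v i j) ^ 2 = (22 : ℤ)) ∧ (∑ i, v i) = 0) := by
  constructor
  · intro n hn h
    obtain ⟨v, hnorm, hsum⟩ := h
    have hkey : ∀ i, ((v i 0)^2 = 4 ∧ (v i 1)^2 = 9 ∧ (v i 2)^2 = 9) ∨
        ((v i 0)^2 = 9 ∧ (v i 1)^2 = 4 ∧ (v i 2)^2 = 9) ∨
        ((v i 0)^2 = 9 ∧ (v i 1)^2 = 9 ∧ (v i 2)^2 = 4) := by
      intro i
      apply sq22
      have := hnorm i
      rw [Fin.sum_univ_three] at this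
      exact this
    have hsq : ∀ i (k : Fin 3), (v i k)^2 = 4 ∨ (v i k)^2 = 9 := by
      intro i k
      have := hkey i
      fin_cases k <;> tauto
    have hquad : ∀ i (k : Fin 3), v i k = 2 ∨ v i k = -2 ∨ v i k = 3 ∨ v i k = -3 := by
      intro i k
      rcases hsq i k with h | h
      · rcases sq4 _ h with h' | h' <;> tauto
      · rcases sq9 _ h with h' | h' <;> tauto
    set A : Fin 3 → ℤ := fun k => ∑ i, (if v i k = 2 then (1:ℤ) else 0) with hA
    set B : Fin 3 → ℤ := fun k => ∑ i, (if v i k = -2 then (1:ℤ) else 0) with hB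
    set C : Fin 3 → ℤ := fun k => ∑ i, (if v i k = 3 then (1:ℤ) else 0) with hC
    set D : Fin 3 → ℤ := fun k => ∑ i, (if v i k = -3 then (1:ℤ) else 0) with hD
    have hnonneg : ∀ k, 0 ≤ A k ∧ 0 ≤ B k ∧ 0 ≤ C k ∧ 0 ≤ D k := by
      intro k
      refine ⟨?_, ?_, ?_, ?_⟩ <;> apply Finset.sum_nonneg <;> intro i _ <;> positivity
    have hcol : ∀ k, ∑ i, v i k = 0 := by
      intro k
      have := congrFun hsum k
      rw [Finset.sum_apply] at this
      simpa using this
    have heq : ∀ k, 2 * A k - 2 * B k + 3 * C k - 3 * D k = 0 := by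
      intro k
      have hpt : ∀ i, v i k = 2 * (if v i k = 2 then (1:ℤ) else 0)
          - 2 * (if v i k = -2 then (1:ℤ) else 0)
          + 3 * (if v i k = 3 then (1:ℤ) else 0)
          - 3 * (if v i k = -3 then (1:ℤ) else 0) := by
        intro i
        rcases hquad i k with h | h | h | h <;> simp [h]
      calc 2 * A k - 2 * B k + 3 * C k - 3 * D k
          = ∑ i, (2 * (if v i k = 2 then (1:ℤ) else 0)
              - 2 * (if v i k = -2 then (1:ℤ) else 0)
              + 3 * (if v i k = 3 then (1:ℤ) else 0)
              - 3 * (if v i k = -3 then (1:ℤ) else 0)) := by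
            rw [Finset.sum_sub_distrib, Finset.sum_add_distrib, Finset.sum_sub_distrib,
              ← Finset.mul_sum, ← Finset.mul_sum, ← Finset.mul_sum, ← Finset.mul_sum]
        _ = ∑ i, v i k := Finset.sum_congr rfl (fun i _ => (hpt i).symm)
        _ = 0 := hcol k
    have htot : ∀ k, A k + B k + C k + D k = n := by
      intro k
      have hpt : ∀ i, (if v i k = 2 then (1:ℤ) else 0) + (if v i k = -2 then (1:ℤ) else 0)
          + (if v i k = 3 then (1:ℤ) else 0) + (if v i k = -3 then (1:ℤ) else 0) = 1 := by
        intro i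
        rcases hquad i k with h | h | h | h <;> simp [h]
      calc A k + B k + C k + D k
          = ∑ i, ((if v i k = 2 then (1:ℤ) else 0) + (if v i k = -2 then (1:ℤ) else 0)
              + (if v i k = 3 then (1:ℤ) else 0) + (if v i k = -3 then (1:ℤ) else 0)) := by
            rw [Finset.sum_add_distrib, Finset.sum_add_distrib, Finset.sum_add_distrib]
        _ = ∑ _i : Fin n, (1:ℤ) := Finset.sum_congr rfl (fun i _ => hpt i)
        _ = n := by simp
    obtain ⟨m, hm⟩ := hn
    have hge3 : ∀ k, 3 ≤ A k + B k := by
      intro k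
      have h1 := heq k
      have h2 := htot k
      have h3 := hnonneg k
      have hdvd : (3:ℤ) ∣ (A k - B k) := by
        have h5 : (3:ℤ) ∣ 2 * (A k - B k) := ⟨D k - C k, by linarith⟩
        omega
      obtain ⟨s, hs⟩ := hdvd
      have hd2 : D k = C k + 2*s := by omega
      have hps : 2*(B k) + 2*(C k) + 5*s = 2*(m:ℤ) + 1 := by omega
      have hsodd : s % 2 = 1 ∨ s % 2 = -1 := by omega
      omega
    have hrow : ∑ k : Fin 3, (A k + B k) = n := by
      have hswap : ∑ k : Fin 3, (A k + B k)
          = ∑ i, ∑ k : Fin 3, ((if v i k = 2 then (1:ℤ) else 0)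
              + (if v i k = -2 then (1:ℤ) else 0)) := by
        rw [Finset.sum_comm]
        exact Finset.sum_congr rfl fun k _ => Finset.sum_add_distrib.symm
      rw [hswap]
      have hpt : ∀ i, ∑ k : Fin 3, ((if v i k = 2 then (1:ℤ) else 0)
          + (if v i k = -2 then (1:ℤ) else 0)) = 1 := by
        intro i
        rw [Fin.sum_univ_three]
        rcases hkey i with ⟨h0,h1,h2⟩ | ⟨h0,h1,h2⟩ | ⟨h0,h1,h2⟩
        · rcases sq4 _ h0 with h | h <;>
            simp [h, (not2 _ h1).1, (not2 _ h1).2, (not2 _ h2).1, (not2 _ h2).2]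
        · rcases sq4 _ h1 with h | h <;>
            simp [h, (not2 _ h0).1, (not2 _ h0).2, (not2 _ h2).1, (not2 _ h2).2]
        · rcases sq4 _ h2 with h | h <;>
            simp [h, (not2 _ h0).1, (not2 _ h0).2, (not2 _ h1).1, (not2 _ h1).2]
      rw [Finset.sum_congr rfl (fun i _ => hpt i)]
      simp
    rw [Fin.sum_univ_three] at hrow
    have g0 := hge3 0; have g1 := hge3 1; have g2 := hge3 2
    omega
  · refine ⟨![![-3,-3,-2], ![-3,-3,-2], ![-3,-3,-2], ![-3,2,-3], ![2,-3,-3],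
              ![2,3,3], ![2,3,3], ![3,2,3], ![3,2,3]], ?_, ?_⟩
    · decide
    · funext k
      have : (∑ i : Fin 9, (![![(-3:ℤ),-3,-2], ![-3,-3,-2], ![-3,-3,-2], ![-3,2,-3],
          ![2,-3,-3], ![2,3,3], ![2,3,3], ![3,2,3], ![3,2,3]]) i) k = 0 := by
        rw [Finset.sum_apply]; fin_cases k <;> decide
      simpa using this
end

section
/- C_3(82) = 7; that is, every odd positive integer n for which there exist vectors v_1, ..., v_n in Z^3, each with squared Euclidean norm 82, summing to the zero vector satisfies n >= 7, and there exist seven vectors in Z^3, each with squared Euclidean norm 82, summing to the zero vector. -/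
/-!
A vector of squared norm 82 lies in `[-9, 9]³`, so reading `v + (9, 9, 9)` as the digits of a
base-91 number turns a zero-sum cycle of length `n` into `n` codes of lattice points summing to
`n` times the code of `0`. The set of `n`-fold sums of the 48 codes, stored as the bits of a
natural number, is small enough for the kernel to compute, and it misses that value for
`n = 1, 3, 5`. Seven vectors summing to zero are exhibited directly.
-/

def symmRange (R : ℕ) : List ℤ := (List.range (2 * R + 1)).map fun i : ℕ => (i : ℤ) - R

lemma mem_symmRange {R : ℕ} {x : ℤ} (h : x ^ 2 < (R + 1) ^ 2) : x ∈ symmRange R := by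
  obtain ⟨hlo, hhi⟩ := abs_lt_of_sq_lt_sq' h (by positivity)
  rw [symmRange, List.mem_map]
  exact ⟨(x + R).toNat, List.mem_range.2 (by omega), by omega⟩

def spherePoints (R : ℕ) (r : ℤ) : List (ℤ × ℤ × ℤ) :=
  ((symmRange R).flatMap fun x => (symmRange R).flatMap fun y => (symmRange R).map fun z =>
    (x, y, z)).filter fun p => p.1 ^ 2 + p.2.1 ^ 2 + p.2.2 ^ 2 = r

lemma sq_lt_of_sum_sq_eq {ι : Type*} [Fintype ι] {v : ι → ℤ} {r : ℤ} {R : ℕ}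
    (h : ∑ j, v j ^ 2 = r) (hr : r < (R + 1) ^ 2) (j : ι) : v j ^ 2 < (R + 1) ^ 2 :=
  (h ▸ Finset.single_le_sum (fun i _ => sq_nonneg (v i)) (Finset.mem_univ j)).trans_lt hr

lemma mem_spherePoints {R : ℕ} {r : ℤ} {v : Fin 3 → ℤ} (h : ∑ j, v j ^ 2 = r)
    (hr : r < (R + 1) ^ 2) : (v 0, v 1, v 2) ∈ spherePoints R r := by
  have hmem j : v j ∈ symmRange R := mem_symmRange (sq_lt_of_sum_sq_eq h hr j)
  rw [Fin.sum_univ_three] at h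
  simp only [spherePoints, List.mem_filter, List.mem_flatMap, List.mem_map, decide_eq_true_eq]
  exact ⟨⟨v 0, hmem 0, v 1, hmem 1, v 2, hmem 2, rfl⟩, h⟩

/-- If `m` is the bitset of `A ⊆ ℕ`, then `shiftUnion l m` is the bitset of `A + l`. -/
def shiftUnion (l : List ℕ) (m : ℕ) : ℕ := l.foldr (fun q acc => acc ||| m <<< q) 0

lemma testBit_shiftUnion {l : List ℕ} {m p q : ℕ} (hp : m.testBit p) (hq : q ∈ l) :
    (shiftUnion l m).testBit (p + q) := by
  induction l with
  | nil => cases hq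
  | cons a t ih =>
    simp only [shiftUnion, List.foldr_cons, Nat.testBit_lor, Bool.or_eq_true] at ih ⊢
    rcases List.mem_cons.1 hq with rfl | hq
    · right
      simpa [Nat.testBit_shiftLeft] using hp
    · exact Or.inl (ih hq)

def sumsetBits (l : List ℕ) (k : ℕ) : ℕ := (shiftUnion l)^[k] 1

lemma testBit_sumsetBits_sum {l xs : List ℕ} (h : ∀ x ∈ xs, x ∈ l) :
    (sumsetBits l xs.length).testBit xs.sum := by
  induction xs with
  | nil => simp [sumsetBits]
  | cons x xs ih =>
    rw [List.length_cons, sumsetBits, Function.iterate_succ_apply', List.sum_cons, add_comm]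
    exact testBit_shiftUnion (ih fun y hy => h y (List.mem_cons_of_mem x hy))
      (h x List.mem_cons_self)

def encodeBase (R B : ℕ) (v : ℤ × ℤ × ℤ) : ℕ :=
  (v.1 + R).toNat + B * (v.2.1 + R).toNat + B ^ 2 * (v.2.2 + R).toNat

lemma encodeBase_cast {R B : ℕ} {x y z : ℤ} (hx : -R ≤ x) (hy : -R ≤ y) (hz : -R ≤ z) :
    (encodeBase R B (x, y, z) : ℤ) = x + B * y + B ^ 2 * z + (1 + B + B ^ 2) * R := by
  simp only [encodeBase]
  push_cast
  rw [Int.toNat_of_nonneg (by omega), Int.toNat_of_nonneg (by omega),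
    Int.toNat_of_nonneg (by omega)]
  ring

lemma testBit_sumsetBits_of_sum_eq_zero {R B n : ℕ} {r : ℤ} (hr : r < (R + 1) ^ 2)
    (v : Fin n → Fin 3 → ℤ) (hv : ∀ i, ∑ j, v i j ^ 2 = r) (hsum : ∑ i, v i = 0) :
    (sumsetBits ((spherePoints R r).map (encodeBase R B)) n).testBit
      (n * ((1 + B + B ^ 2) * R)) := by
  have hlow i j : -(R : ℤ) ≤ v i j := by
    have := abs_lt_of_sq_lt_sq' (sq_lt_of_sum_sq_eq (hv i) hr j) (by positivity)
    omega
  have hcoord j : ∑ i, v i j = 0 := by simpa using congrFun hsum j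
  have hcodes : ∑ i, encodeBase R B (v i 0, v i 1, v i 2) = n * ((1 + B + B ^ 2) * R) := by
    zify
    rw [Finset.sum_congr rfl fun i _ => encodeBase_cast (hlow i 0) (hlow i 1) (hlow i 2)]
    simp [Finset.sum_add_distrib, ← Finset.mul_sum, hcoord]
  have := testBit_sumsetBits_sum (l := (spherePoints R r).map (encodeBase R B))
    (xs := List.ofFn fun i => encodeBase R B (v i 0, v i 1, v i 2))
    fun _ hx => by
      obtain ⟨i, rfl⟩ := List.mem_ofFn.1 hx
      exact List.mem_map_of_mem (mem_spherePoints (hv i) hr)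
  rwa [List.length_ofFn, List.sum_ofFn, hcodes] at this

set_option maxRecDepth 100000 in
/-- Since `91 > 5 * 18`, sums of at most five codes do not carry, so these bits record exactly
whether an odd number `< 7` of the 48 points sums to zero. -/
lemma sphere82_testBit_sumsetBits_odd_lt_seven :
    ∀ k < 3, (sumsetBits ((spherePoints 9 82).map (encodeBase 9 91)) (2 * k + 1)).testBit
      ((2 * k + 1) * ((1 + 91 + 91 ^ 2) * 9)) = false := by
  decide

/-- `C₃(82) = 7`: every odd `n` admitting vectors `v₁, …, vₙ ∈ ℤ³`, each of
squared norm 82, summing to zero, satisfies `n ≥ 7`, and seven such vectors exist. -/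
theorem C3_82_eq_seven :
    (∀ n : ℕ, Odd n →
      (∃ v : Fin n → (Fin 3 → ℤ),
        (∀ i, ∑ j, (v i j) ^ 2 = (82 : ℤ)) ∧ (∑ i, v i) = 0) → 7 ≤ n) ∧
    (∃ v : Fin 7 → (Fin 3 → ℤ),
      (∀ i, ∑ j, (v i j) ^ 2 = (82 : ℤ)) ∧ (∑ i, v i) = 0) := by
  refine ⟨fun n hn ⟨v, hv, hsum⟩ => ?_, ?_⟩
  · have hbit := testBit_sumsetBits_of_sum_eq_zero (R := 9) (B := 91) (by norm_num) v hv hsum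
    by_contra! hn7
    obtain ⟨k, rfl⟩ := hn
    rw [sphere82_testBit_sumsetBits_odd_lt_seven k (by omega)] at hbit
    exact Bool.false_ne_true hbit
  · exact ⟨![![9, -1, 0], ![-8, -3, -3], ![-3, -8, -3], ![0, 9, -1], ![-1, 9, 0], ![0, -9, -1],
      ![3, 3, 8]], by decide, by decide⟩
end

section
/- For all integers x and y, the five vectors (-2x - y, -x - y, -x + 2y), (-2x - y, -x - y, -x + 2y), (x + y, 2x + y, x - 2y), (x + 2y, -x - y, 2x - y), (2x - y, x + 2y, -x - y) in Z^3 each have squared Euclidean norm 6x^2 + 2xy + 6y^2 and sum to the zero vector. Consequently, for every positive integer t representable as t = 6x^2 + 2xy + 6y^2 with integers x, y, there exist five vectors in Z^3, each with squared Euclidean norm t, summing to the zero vector. -/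
/-- Parameterization 1 of 5-cycles in `ℤ³`. -/
def param1 (x y : ℤ) : Fin 5 → (Fin 3 → ℤ) :=
  ![![-2 * x - y, -x - y, -x + 2 * y],
    ![-2 * x - y, -x - y, -x + 2 * y],
    ![x + y, 2 * x + y, x - 2 * y],
    ![x + 2 * y, -x - y, 2 * x - y],
    ![2 * x - y, x + 2 * y, -x - y]]

lemma param1_main (x y : ℤ) :
    (∀ i, ∑ j, (param1 x y i j) ^ 2 = 6 * x ^ 2 + 2 * x * y + 6 * y ^ 2) ∧
    (∑ i, param1 x y i) = 0 := by
  constructor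
  · intro i
    fin_cases i <;> simp [param1, Fin.sum_univ_succ] <;> ring
  · funext j
    simp [param1, Fin.sum_univ_succ]
    fin_cases j <;> simp <;> ring

/-- For all integers `x, y`, the five vectors of Parameterization 1 each have
squared Euclidean norm `6x² + 2xy + 6y²` and sum to the zero vector. Consequently, every
positive integer `t = 6x² + 2xy + 6y²` admits five vectors in `ℤ³`, each of squared norm
`t`, summing to the zero vector. -/
theorem param1_five_cycle :
    (∀ x y : ℤ,
      (∀ i, ∑ j, (param1 x y i j) ^ 2 = 6 * x ^ 2 + 2 * x * y + 6 * y ^ 2) ∧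
      (∑ i, param1 x y i) = 0) ∧
    (∀ t : ℕ, 0 < t → (∃ x y : ℤ, (t : ℤ) = 6 * x ^ 2 + 2 * x * y + 6 * y ^ 2) →
      ∃ v : Fin 5 → (Fin 3 → ℤ),
        (∀ i, ∑ j, (v i j) ^ 2 = (t : ℤ)) ∧ (∑ i, v i) = 0) := by
  refine ⟨param1_main, ?_⟩
  rintro t _ ⟨x, y, ht⟩
  exact ⟨param1 x y, fun i => by rw [(param1_main x y).1 i, ht], (param1_main x y).2⟩
end

section
/- For all integers x and y, the five vectors (7x + 10y, 7x + y, 3y), (7x + 10y, 7x + y, 3y), (-7x - 6y, 7y, 7x + 5y), (-3x - 9y, -5x - 2y, -8x - 5y), (-4x - 5y, -9x - 7y, x - 6y) in Z^3 each have squared Euclidean norm 98x^2 + 154xy + 110y^2 and sum to the zero vector. Consequently, for every positive integer t representable as t = 98x^2 + 154xy + 110y^2 with integers x, y, there exist five vectors in Z^3, each with squared Euclidean norm t, summing to the zero vector. -/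
/-- Parameterization 2 of 5-cycles in `ℤ³`. -/
def param2 (x y : ℤ) : Fin 5 → (Fin 3 → ℤ) :=
  ![![7 * x + 10 * y, 7 * x + y, 3 * y],
    ![7 * x + 10 * y, 7 * x + y, 3 * y],
    ![-7 * x - 6 * y, 7 * y, 7 * x + 5 * y],
    ![-3 * x - 9 * y, -5 * x - 2 * y, -8 * x - 5 * y],
    ![-4 * x - 5 * y, -9 * x - 7 * y, x - 6 * y]]

lemma param2_main (x y : ℤ) :
    (∀ i, ∑ j, (param2 x y i j) ^ 2 = 98 * x ^ 2 + 154 * x * y + 110 * y ^ 2) ∧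
    (∑ i, param2 x y i) = 0 := by
  constructor
  · intro i
    fin_cases i <;> simp [param2, Fin.sum_univ_succ] <;> ring
  · funext j
    fin_cases j <;> simp [param2, Fin.sum_univ_succ] <;> ring

/-- For all integers `x, y`, the five vectors of Parameterization 2 each have
squared Euclidean norm `98x² + 154xy + 110y²` and sum to the zero vector. Consequently,
every positive integer `t = 98x² + 154xy + 110y²` admits five vectors in `ℤ³`, each of
squared norm `t`, summing to the zero vector. -/
theorem param2_five_cycle :
    (∀ x y : ℤ,
      (∀ i, ∑ j, (param2 x y i j) ^ 2 = 98 * x ^ 2 + 154 * x * y + 110 * y ^ 2) ∧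
      (∑ i, param2 x y i) = 0) ∧
    (∀ t : ℕ, 0 < t → (∃ x y : ℤ, (t : ℤ) = 98 * x ^ 2 + 154 * x * y + 110 * y ^ 2) →
      ∃ v : Fin 5 → (Fin 3 → ℤ),
        (∀ i, ∑ j, (v i j) ^ 2 = (t : ℤ)) ∧ (∑ i, v i) = 0) := by
  refine ⟨param2_main, ?_⟩
  intro t _ ⟨x, y, ht⟩
  exact ⟨param2 x y, fun i => ht ▸ (param2_main x y).1 i, (param2_main x y).2⟩
end

section
/- For any positive integers r and n with n odd, there exist vectors v_1, ..., v_n in Z^3, each with squared Euclidean norm r, summing to the zero vector, if and only if there exist vectors w_1, ..., w_n in Z^3, each with squared Euclidean norm 4r, summing to the zero vector. (Consequently C_3(r) = C_3(4r).) -/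
lemma key_even (a b c r : ℤ) (h : a ^ 2 + b ^ 2 + c ^ 2 = 4 * r) :
    a % 2 = 0 ∧ b % 2 = 0 ∧ c % 2 = 0 := by
  obtain ⟨x, hx⟩ := Int.even_or_odd' a
  obtain ⟨y, hy⟩ := Int.even_or_odd' b
  obtain ⟨z, hz⟩ := Int.even_or_odd' c
  rcases hx with hx | hx <;> rcases hy with hy | hy <;> rcases hz with hz | hz <;>
    subst hx <;> subst hy <;> subst hz <;> ring_nf at h <;>
    obtain ⟨X, hX⟩ : ∃ X, x ^ 2 = X := ⟨_, rfl⟩ <;>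
    obtain ⟨Y, hY⟩ : ∃ Y, y ^ 2 = Y := ⟨_, rfl⟩ <;>
    obtain ⟨Z, hZ⟩ : ∃ Z, z ^ 2 = Z := ⟨_, rfl⟩ <;>
    rw [hX, hY, hZ] at h <;> omega

/-- For positive integers `r` and odd `n`, a vector cycle of length `n` and
squared magnitude `r` exists in `ℤ³` if and only if one of squared magnitude `4r` exists. -/
theorem cycle_iff_cycle_four_mul (r n : ℕ) (hr : 0 < r) (hn : 0 < n) (hodd : Odd n) :
    (∃ v : Fin n → (Fin 3 → ℤ),
      (∀ i, ∑ j, (v i j) ^ 2 = (r : ℤ)) ∧ (∑ i, v i) = 0) ↔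
    (∃ w : Fin n → (Fin 3 → ℤ),
      (∀ i, ∑ j, (w i j) ^ 2 = (4 * r : ℤ)) ∧ (∑ i, w i) = 0) := by
  constructor
  · rintro ⟨v, hv1, hv2⟩
    refine ⟨fun i j => 2 * v i j, fun i => ?_, ?_⟩
    · have h := hv1 i
      calc ∑ j, (2 * v i j) ^ 2 = 4 * ∑ j, (v i j) ^ 2 := by
            rw [Finset.mul_sum]; apply Finset.sum_congr rfl; intros; ring
        _ = (4 * r : ℤ) := by rw [h]
    · funext j
      have h := congrFun hv2 j
      simp only [Finset.sum_apply, Pi.zero_apply] at h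
      simp only [Finset.sum_apply, Pi.zero_apply, ← Finset.mul_sum, h, mul_zero]
  · rintro ⟨w, hw1, hw2⟩
    have heven : ∀ i j, w i j % 2 = 0 := by
      intro i j
      have h := hw1 i
      rw [Fin.sum_univ_three] at h
      have hk := key_even _ _ _ _ h
      fin_cases j
      · exact hk.1
      · exact hk.2.1
      · exact hk.2.2
    have hdiv : ∀ i j, w i j = 2 * (w i j / 2) := by
      intro i j
      exact (Int.mul_ediv_cancel' (Int.dvd_of_emod_eq_zero (heven i j))).symm
    refine ⟨fun i j => w i j / 2, fun i => ?_, ?_⟩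
    · have h := hw1 i
      have h4 : (4 : ℤ) * ∑ j, (w i j / 2) ^ 2 = 4 * r := by
        rw [Finset.mul_sum]
        calc ∑ j, 4 * (w i j / 2) ^ 2 = ∑ j, (w i j) ^ 2 := by
              apply Finset.sum_congr rfl; intro j _
              conv_rhs => rw [hdiv i j]
              ring
          _ = (4 * r : ℤ) := h
        
      have := mul_left_cancel₀ (by norm_num : (4:ℤ) ≠ 0) h4
      linarith
    · funext j
      have h := congrFun hw2 j
      simp only [Finset.sum_apply, Pi.zero_apply] at h
      simp only [Finset.sum_apply, Pi.zero_apply]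
      have h2 : (2 : ℤ) * ∑ i, w i j / 2 = 0 := by
        rw [Finset.mul_sum]
        calc ∑ i, 2 * (w i j / 2) = ∑ i, w i j := by
              apply Finset.sum_congr rfl; intro i _; exact (hdiv i j).symm
          _ = 0 := h
      linarith
end

section
/- There is no coplanar odd vector cycle in Z^3 of squared magnitude 10; that is, there do not exist an odd positive integer n, vectors v_1, ..., v_n in Z^3 each with squared Euclidean norm 10 summing to the zero vector, and a nonzero vector u in Z^3 with u orthogonal (dot product zero) to every v_i. (In the paper's notation, f(10) does not exist.) -/
/-- Structure of integer vectors of squared norm 10. -/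
lemma aux_struct_ten (a b c : ℤ) (h : a ^ 2 + b ^ 2 + c ^ 2 = 10) :
    (a = 0 ∧ ((b.natAbs = 1 ∧ c.natAbs = 3) ∨ (b.natAbs = 3 ∧ c.natAbs = 1))) ∨
    (b = 0 ∧ ((a.natAbs = 1 ∧ c.natAbs = 3) ∨ (a.natAbs = 3 ∧ c.natAbs = 1))) ∨
    (c = 0 ∧ ((a.natAbs = 1 ∧ b.natAbs = 3) ∨ (a.natAbs = 3 ∧ b.natAbs = 1))) := by
  have h' : a * a + b * b + c * c = 10 := by linear_combination h
  have ha1 : -3 ≤ a := by nlinarith [mul_self_nonneg b, mul_self_nonneg c]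
  have ha2 : a ≤ 3 := by nlinarith [mul_self_nonneg b, mul_self_nonneg c]
  have hb1 : -3 ≤ b := by nlinarith [mul_self_nonneg a, mul_self_nonneg c]
  have hb2 : b ≤ 3 := by nlinarith [mul_self_nonneg a, mul_self_nonneg c]
  have hc1 : -3 ≤ c := by nlinarith [mul_self_nonneg a, mul_self_nonneg b]
  have hc2 : c ≤ 3 := by nlinarith [mul_self_nonneg a, mul_self_nonneg b]
  clear h
  interval_cases a <;> interval_cases b <;> interval_cases c <;> omega

/-- Mixed parity contradiction for a 2-term orthogonality relation. -/
lemma aux_mixed (x y a b : ℤ) (hx : x % 2 = 1) (hy : y % 2 = 0) (ha : a % 2 = 1)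
    (h : x * a + y * b = 0) : False := by
  have h1 : (x * a) % 2 = 1 := by rw [Int.mul_emod, hx, ha]; decide
  have h2 : (y * b) % 2 = 0 := by rw [Int.mul_emod, hy]; simp
  omega

/-- From a 2-term orthogonality relation with coefficients of absolute value 1 and 3. -/
lemma aux_rel (x y a b : ℤ) (h : x * a + y * b = 0)
    (hab : (a.natAbs = 1 ∧ b.natAbs = 3) ∨ (a.natAbs = 3 ∧ b.natAbs = 1)) :
    x.natAbs = 3 * y.natAbs ∨ y.natAbs = 3 * x.natAbs := by
  have h0 : x * a = -(y * b) := by linarith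
  have h1 := congrArg Int.natAbs h0
  rw [Int.natAbs_neg, Int.natAbs_mul, Int.natAbs_mul] at h1
  rcases hab with ⟨h2, h3⟩ | ⟨h2, h3⟩ <;> rw [h2, h3] at h1 <;> omega

lemma aux_val (x y : ℕ) (hy : y ≠ 0) (h : x = 3 * y) :
    padicValNat 3 x = padicValNat 3 y + 1 := by
  haveI : Fact (Nat.Prime 3) := ⟨by norm_num⟩
  subst h
  rw [padicValNat.mul (by norm_num) hy, padicValNat.self (by norm_num)]
  omega

/-- Reduction: we may assume the orthogonal vector has an odd coordinate. -/
lemma aux_reduce {n : ℕ} (v : Fin n → Fin 3 → ℤ) :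
    ∀ m : ℕ, ∀ u : Fin 3 → ℤ,
      (u 0).natAbs + (u 1).natAbs + (u 2).natAbs ≤ m → u ≠ 0 →
      (∀ i, u 0 * v i 0 + u 1 * v i 1 + u 2 * v i 2 = 0) →
      ∃ w : Fin 3 → ℤ, (w 0 % 2 = 1 ∨ w 1 % 2 = 1 ∨ w 2 % 2 = 1) ∧
        ∀ i, w 0 * v i 0 + w 1 * v i 1 + w 2 * v i 2 = 0 := by
  intro m
  induction m with
  | zero =>
    intro u h hne _
    exfalso
    apply hne
    have h0 : u 0 = 0 := by omega
    have h1 : u 1 = 0 := by omega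
    have h2 : u 2 = 0 := by omega
    funext j
    fin_cases j
    exacts [h0, h1, h2]
  | succ m ih =>
    intro u h hne hdot
    by_cases h0 : u 0 % 2 = 1 ∨ u 1 % 2 = 1 ∨ u 2 % 2 = 1
    · exact ⟨u, h0, hdot⟩
    · push_neg at h0
      set w : Fin 3 → ℤ := fun j => u j / 2 with hwdef
      have hw : ∀ j, u j = 2 * w j := by
        intro j
        have e0 : u 0 % 2 = 0 := by omega
        have e1 : u 1 % 2 = 0 := by omega
        have e2 : u 2 % 2 = 0 := by omega
        fin_cases j <;> simp [hwdef] <;> omega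
      apply ih w
      · have a0 := hw 0; have a1 := hw 1; have a2 := hw 2
        omega
      · intro hw0
        apply hne
        funext j
        have hthis : w j = 0 := by rw [hw0]; rfl
        show u j = 0
        rw [hw j, hthis, mul_zero]
      · intro i
        have hd := hdot i
        rw [hw 0, hw 1, hw 2] at hd
        linarith

set_option maxHeartbeats 1000000

/-- There is no coplanar odd vector cycle in `ℤ³` of squared magnitude 10:
there are no odd `n`, vectors `v₁, …, vₙ ∈ ℤ³` of squared norm 10 summing to zero, and a
nonzero `u ∈ ℤ³` orthogonal to every `vᵢ`. (In the paper's notation, `f(10)` does not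
exist.) -/
theorem no_coplanar_odd_cycle_ten :
    ¬ ∃ (n : ℕ), Odd n ∧ 0 < n ∧
      ∃ v : Fin n → (Fin 3 → ℤ),
        (∀ i, ∑ j, (v i j) ^ 2 = (10 : ℤ)) ∧ (∑ i, v i) = 0 ∧
        ∃ u : Fin 3 → ℤ, u ≠ 0 ∧ ∀ i, ∑ j, u j * v i j = 0 := by
  rintro ⟨n, hnodd, hnpos, v, hv10, hsum, u, hu0, hudot⟩
  have hstruct : ∀ i : Fin n,
      (v i 0 = 0 ∧ (((v i 1).natAbs = 1 ∧ (v i 2).natAbs = 3) ∨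
        ((v i 1).natAbs = 3 ∧ (v i 2).natAbs = 1))) ∨
      (v i 1 = 0 ∧ (((v i 0).natAbs = 1 ∧ (v i 2).natAbs = 3) ∨
        ((v i 0).natAbs = 3 ∧ (v i 2).natAbs = 1))) ∨
      (v i 2 = 0 ∧ (((v i 0).natAbs = 1 ∧ (v i 1).natAbs = 3) ∨
        ((v i 0).natAbs = 3 ∧ (v i 1).natAbs = 1))) := by
    intro i
    exact aux_struct_ten _ _ _ (by simpa [Fin.sum_univ_three] using hv10 i)
  -- coordinatewise sums vanish
  have hsumj : ∀ j : Fin 3, ∑ i, v i j = 0 := by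
    intro j
    have := congrFun hsum j
    simpa using this
  -- each coordinate is realised as the zero coordinate of some vector
  have hex : ∀ j : Fin 3, (∀ i, v i j = 0 ∨ (v i j) % 2 = 1) → ∃ i, v i j = 0 := by
    intro j hzo
    by_contra hne
    push_neg at hne
    have hodd' : ∀ i, v i j % 2 = 1 := fun i => by
      rcases hzo i with h | h
      · exact absurd h (hne i)
      · exact h
    have h1 : ∀ i : Fin n, ((v i j : ZMod 2)) = 1 := by
      intro i
      obtain ⟨k, hk⟩ : ∃ k, v i j = 2 * k + 1 := ⟨v i j / 2, by have := hodd' i; omega⟩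
      rw [hk]
      push_cast
      have h2 : (2 : ZMod 2) = 0 := by decide
      rw [h2]
      ring
    have h3 : ((∑ i, v i j : ℤ) : ZMod 2) = (n : ZMod 2) := by
      push_cast
      rw [Finset.sum_congr rfl fun i _ => h1 i]
      simp
    rw [hsumj j] at h3
    obtain ⟨k, hk⟩ := hnodd
    rw [hk] at h3
    push_cast at h3
    have h2 : (2 : ZMod 2) = 0 := by decide
    rw [h2] at h3
    simp at h3
  have hex0 : ∃ i, v i 0 = 0 := by
    apply hex 0; intro i; rcases hstruct i with ⟨h, h'⟩ | ⟨h, h'⟩ | ⟨h, h'⟩ <;> omega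
  have hex1 : ∃ i, v i 1 = 0 := by
    apply hex 1; intro i; rcases hstruct i with ⟨h, h'⟩ | ⟨h, h'⟩ | ⟨h, h'⟩ <;> omega
  have hex2 : ∃ i, v i 2 = 0 := by
    apply hex 2; intro i; rcases hstruct i with ⟨h, h'⟩ | ⟨h, h'⟩ | ⟨h, h'⟩ <;> omega
  obtain ⟨i0, hz0⟩ := hex0
  obtain ⟨i1, hz1⟩ := hex1
  obtain ⟨i2, hz2⟩ := hex2
  -- the absolute-value facts for the nonzero coordinates
  have hp0 : ((v i0 1).natAbs = 1 ∧ (v i0 2).natAbs = 3) ∨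
      ((v i0 1).natAbs = 3 ∧ (v i0 2).natAbs = 1) := by
    rcases hstruct i0 with ⟨h, h'⟩ | ⟨h, h'⟩ | ⟨h, h'⟩ <;> omega
  have hp1 : ((v i1 0).natAbs = 1 ∧ (v i1 2).natAbs = 3) ∨
      ((v i1 0).natAbs = 3 ∧ (v i1 2).natAbs = 1) := by
    rcases hstruct i1 with ⟨h, h'⟩ | ⟨h, h'⟩ | ⟨h, h'⟩ <;> omega
  have hp2 : ((v i2 0).natAbs = 1 ∧ (v i2 1).natAbs = 3) ∨
      ((v i2 0).natAbs = 3 ∧ (v i2 1).natAbs = 1) := by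
    rcases hstruct i2 with ⟨h, h'⟩ | ⟨h, h'⟩ | ⟨h, h'⟩ <;> omega
  -- reduce u to have an odd coordinate
  have hudot' : ∀ i, u 0 * v i 0 + u 1 * v i 1 + u 2 * v i 2 = 0 := by
    intro i
    simpa [Fin.sum_univ_three] using hudot i
  obtain ⟨w, hwodd, hwdot⟩ :=
    aux_reduce v ((u 0).natAbs + (u 1).natAbs + (u 2).natAbs) u le_rfl hu0 hudot'
  -- the two-term relations
  have hd0 : w 1 * v i0 1 + w 2 * v i0 2 = 0 := by
    have := hwdot i0; rw [hz0] at this; linarith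
  have hd1 : w 0 * v i1 0 + w 2 * v i1 2 = 0 := by
    have := hwdot i1; rw [hz1] at this; linarith
  have hd2 : w 0 * v i2 0 + w 1 * v i2 1 = 0 := by
    have := hwdot i2; rw [hz2] at this; linarith
  -- oddness of nonzero coordinates
  have ho01 : (v i0 1) % 2 = 1 := by omega
  have ho02 : (v i0 2) % 2 = 1 := by omega
  have ho10 : (v i1 0) % 2 = 1 := by omega
  have ho12 : (v i1 2) % 2 = 1 := by omega
  have ho20 : (v i2 0) % 2 = 1 := by omega
  have ho21 : (v i2 1) % 2 = 1 := by omega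
  -- case analysis on parities of w
  rcases Int.emod_two_eq (w 0) with e0 | e0 <;>
    rcases Int.emod_two_eq (w 1) with e1 | e1 <;>
      rcases Int.emod_two_eq (w 2) with e2 | e2
  · omega  -- all even, contradicts hwodd
  · exact aux_mixed (w 2) (w 1) (v i0 2) (v i0 1) e2 e1 ho02 (by linarith)
  · exact aux_mixed (w 1) (w 0) (v i2 1) (v i2 0) e1 e0 ho21 (by linarith)
  · exact aux_mixed (w 1) (w 0) (v i2 1) (v i2 0) e1 e0 ho21 (by linarith)
  · exact aux_mixed (w 0) (w 1) (v i2 0) (v i2 1) e0 e1 ho20 (by linarith)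
  · exact aux_mixed (w 0) (w 1) (v i2 0) (v i2 1) e0 e1 ho20 (by linarith)
  · exact aux_mixed (w 0) (w 2) (v i1 0) (v i1 2) e0 e2 ho10 (by linarith)
  · -- all coordinates of w odd: 3-adic valuation parity argument
    have hN0 : (w 0).natAbs ≠ 0 := by omega
    have hN1 : (w 1).natAbs ≠ 0 := by omega
    have hN2 : (w 2).natAbs ≠ 0 := by omega
    have r12 := aux_rel (w 1) (w 2) (v i0 1) (v i0 2) hd0 hp0
    have r02 := aux_rel (w 0) (w 2) (v i1 0) (v i1 2) hd1 hp1
    have r01 := aux_rel (w 0) (w 1) (v i2 0) (v i2 1) hd2 hp2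
    have v12 : padicValNat 3 (w 1).natAbs = padicValNat 3 (w 2).natAbs + 1 ∨
        padicValNat 3 (w 2).natAbs = padicValNat 3 (w 1).natAbs + 1 := by
      rcases r12 with h | h
      · exact Or.inl (aux_val _ _ hN2 h)
      · exact Or.inr (aux_val _ _ hN1 h)
    have v02 : padicValNat 3 (w 0).natAbs = padicValNat 3 (w 2).natAbs + 1 ∨
        padicValNat 3 (w 2).natAbs = padicValNat 3 (w 0).natAbs + 1 := by
      rcases r02 with h | h
      · exact Or.inl (aux_val _ _ hN2 h)
      · exact Or.inr (aux_val _ _ hN0 h)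
    have v01 : padicValNat 3 (w 0).natAbs = padicValNat 3 (w 1).natAbs + 1 ∨
        padicValNat 3 (w 1).natAbs = padicValNat 3 (w 0).natAbs + 1 := by
      rcases r01 with h | h
      · exact Or.inl (aux_val _ _ hN1 h)
      · exact Or.inr (aux_val _ _ hN0 h)
    omega
end

section
/- Let t be a positive integer with t congruent to 2 modulo 4 whose square-free part contains at least one odd prime factor congruent to 2 modulo 3. Then there do not exist three vectors in Q^3, each with squared Euclidean norm t, summing to the zero vector; that is, the graph G(Q^3, sqrt(t)) contains no triangle. -/
/-!
Let `a, b, -a - b` be the triangle, viewed in `ℚ_p³`. Since `2 a ⬝ b = -t`, the vectors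
`a, b, a × b` form a basis in which `X² + Y² + Z²` becomes `t (x² - x y + y² + 3 t (z/2)²)`.
For odd `p` the sum of three squares is isotropic over `ℚ_p` (Hensel), but the second form is
not: for `p ≡ 2 (mod 3)` the form `x² - x y + y²` is anisotropic modulo `p`, so its nonzero
values have even valuation, while `3 t (z/2)²` has odd valuation.
-/

open Matrix

theorem two_mul_dotProduct_eq_of_add_add_eq_zero {n R : Type*} [Fintype n] [CommRing R]
    {u v w : n → R} (h : u + v + w = 0) : 2 * (u ⬝ᵥ v) = w ⬝ᵥ w - u ⬝ᵥ u - v ⬝ᵥ v := by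
  rw [eq_neg_of_add_eq_zero_right h]
  simp only [neg_dotProduct, dotProduct_neg, add_dotProduct, dotProduct_add,
    dotProduct_comm v u]
  ring

theorem dotProduct_self_smul_add_smul_add_smul_cross {R : Type*} [CommRing R]
    (a b : Fin 3 → R) (x y z : R) :
    (x • a + y • b + z • a ⨯₃ b) ⬝ᵥ (x • a + y • b + z • a ⨯₃ b) =
      x ^ 2 * (a ⬝ᵥ a) + 2 * x * y * (a ⬝ᵥ b) + y ^ 2 * (b ⬝ᵥ b) +
        z ^ 2 * (a ⬝ᵥ a * b ⬝ᵥ b - (a ⬝ᵥ b) ^ 2) := by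
  simp only [add_dotProduct, dotProduct_add, smul_dotProduct, dotProduct_smul, smul_eq_mul,
    dot_self_cross, dot_cross_self, dotProduct_comm (a ⨯₃ b), cross_dot_cross, dotProduct_comm b a]
  ring

theorem exists_smul_add_smul_add_smul_cross_eq {K : Type*} [Field K] {a b : Fin 3 → K}
    (h : a ⨯₃ b ⬝ᵥ a ⨯₃ b ≠ 0) (w : Fin 3 → K) :
    ∃ x y z : K, x • a + y • b + z • a ⨯₃ b = w := by
  have hdet : IsUnit (det ![a ⨯₃ b, a, b]) := by
    rwa [isUnit_iff_ne_zero, ← triple_product_eq_det]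
  obtain ⟨c, rfl⟩ := vecMul_surjective_iff_isUnit.mpr ((isUnit_iff_isUnit_det _).mpr hdet) w
  refine ⟨c 1, c 2, c 0, ?_⟩
  ext j
  simp [vecMul, dotProduct, Fin.sum_univ_three]
  ring

theorem ZMod.eq_zero_of_sq_sub_mul_add_sq_eq_zero {p : ℕ} [Fact p.Prime] (hp : p % 3 = 2)
    {x y : ZMod p} (h : x ^ 2 - x * y + y ^ 2 = 0) : x = 0 ∧ y = 0 := by
  by_cases hy : y = 0
  · subst hy
    exact ⟨pow_eq_zero_iff two_ne_zero |>.mp (by simpa using h), rfl⟩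
  exfalso
  -- `-x / y` would be a primitive cube root of unity, forcing `3 ∣ p - 1`.
  obtain ⟨ζ, hζ⟩ : ∃ ζ : ZMod p, ζ ^ 2 + ζ + 1 = 0 :=
    ⟨-x / y, by field_simp; linear_combination h⟩
  have hζ3 : ζ ^ 3 = 1 := by linear_combination (ζ - 1) * hζ
  have hζ1 : ζ ≠ 1 := by
    rintro rfl
    have h3 : ((3 : ℕ) : ZMod p) = 0 := by push_cast; linear_combination hζ
    rw [ZMod.natCast_eq_zero_iff, Nat.dvd_prime Nat.prime_three] at h3
    omega
  have h3 : 3 ∣ p - 1 := orderOf_eq_prime hζ3 hζ1 ▸ ZMod.orderOf_dvd_card_sub_one (by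
    rintro rfl; simp at hζ3)
  omega

namespace PadicInt

variable {p : ℕ} [Fact p.Prime]

theorem isUnit_iff_toZMod_ne_zero {z : ℤ_[p]} : IsUnit z ↔ toZMod z ≠ 0 := by
  rw [← IsLocalRing.notMem_maximalIdeal, ← ker_toZMod, RingHom.mem_ker]

theorem valuation_eq_zero_of_toZMod_ne_zero {z : ℤ_[p]} (h : toZMod z ≠ 0) : z.valuation = 0 := by
  obtain ⟨w, hzw⟩ := (isUnit_iff_toZMod_ne_zero.mpr h).exists_right_inv
  have := congrArg valuation hzw
  rw [valuation_mul (left_ne_zero_of_mul_eq_one hzw) (right_ne_zero_of_mul_eq_one hzw),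
    valuation_one] at this
  omega

theorem exists_sq_eq_of_toZMod_eq_sq (hp : p ≠ 2) {u : ℤ_[p]} {b : ZMod p} (hb : b ≠ 0)
    (hu : toZMod u = b ^ 2) : ∃ z : ℤ_[p], z ^ 2 = u := by
  obtain ⟨a, rfl⟩ := ZMod.ringHom_surjective (toZMod : ℤ_[p] →+* ZMod p) b
  have h2 : (2 : ZMod p) ≠ 0 := by
    rw [← Nat.cast_ofNat, Ne, ZMod.natCast_eq_zero_iff, Nat.prime_dvd_prime_iff_eq Fact.out
      Nat.prime_two]
    exact hp
  have hderiv : ‖(Polynomial.X ^ 2 - Polynomial.C u).derivative.aeval a‖ = 1 := by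
    have : (Polynomial.X ^ 2 - Polynomial.C u).derivative.aeval a = 2 * a := by
      simp [one_add_one_eq_two]
    rw [this, ← isUnit_iff, isUnit_iff_toZMod_ne_zero, map_mul, map_ofNat]
    exact mul_ne_zero h2 hb
  obtain ⟨z, hz, -⟩ := hensels_lemma (F := Polynomial.X ^ 2 - Polynomial.C u) (a := a) (by
    rw [hderiv, one_pow, ← not_isUnit_iff, isUnit_iff_toZMod_ne_zero, not_not]
    simp [hu])
  exact ⟨z, by simpa [sub_eq_zero] using hz⟩

end PadicInt

namespace Padic

variable {p : ℕ} [Fact p.Prime]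

theorem valuation_neg (x : ℚ_[p]) : (-x).valuation = x.valuation := by
  have h := valuation_pow (-x) 2
  rw [neg_sq, valuation_pow] at h
  omega

theorem exists_sq_add_sq_add_one_eq_zero (hp : p ≠ 2) : ∃ x y : ℚ_[p], x ^ 2 + y ^ 2 + 1 = 0 := by
  obtain ⟨a, b, hb, hab⟩ : ∃ a b : ZMod p, b ≠ 0 ∧ a ^ 2 + b ^ 2 = -1 := by
    obtain ⟨a, b, hab⟩ := ZMod.sq_add_sq p (-1)
    by_cases hb : b = 0
    · subst hb
      exact ⟨0, a, by rintro rfl; simp at hab, by simpa using hab⟩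
    · exact ⟨a, b, hb, hab⟩
  obtain ⟨ξ, rfl⟩ := ZMod.ringHom_surjective (PadicInt.toZMod : ℤ_[p] →+* ZMod p) a
  obtain ⟨z, hz⟩ := PadicInt.exists_sq_eq_of_toZMod_eq_sq hp hb (u := -1 - ξ ^ 2)
    (by simp only [map_sub, map_neg, map_one, map_pow]; linear_combination -hab)
  refine ⟨ξ, z, ?_⟩
  have hz' : ((z ^ 2 : ℤ_[p]) : ℚ_[p]) = ((-1 - ξ ^ 2 : ℤ_[p]) : ℚ_[p]) := by rw [hz]
  push_cast at hz'
  linear_combination hz'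

theorem sq_sub_mul_add_sq_ne_zero_and_valuation_eq (hp : p % 3 = 2) {x y : ℚ_[p]} (hy : y ≠ 0)
    (hxy : ‖x‖ ≤ ‖y‖) :
    x ^ 2 - x * y + y ^ 2 ≠ 0 ∧ (x ^ 2 - x * y + y ^ 2).valuation = 2 * y.valuation := by
  set e : ℤ_[p] := ⟨x / y, by rw [norm_div]; exact div_le_one_of_le₀ hxy (norm_nonneg _)⟩
  have he : PadicInt.toZMod (e ^ 2 - e + 1) ≠ 0 := fun h =>
    one_ne_zero (ZMod.eq_zero_of_sq_sub_mul_add_sq_eq_zero hp (x := PadicInt.toZMod e) (y := 1)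
      (by simpa using h)).2
  have hq : x ^ 2 - x * y + y ^ 2 = y ^ 2 * ((e ^ 2 - e + 1 : ℤ_[p]) : ℚ_[p]) := by
    push_cast
    simp only [e]
    field_simp
  have hne : ((e ^ 2 - e + 1 : ℤ_[p]) : ℚ_[p]) ≠ 0 := by
    rw [Ne, PadicInt.coe_eq_zero]
    rintro h
    exact he (by rw [h, map_zero])
  rw [hq, valuation_mul (pow_ne_zero 2 hy) hne, valuation_pow, PadicInt.valuation_coe,
    PadicInt.valuation_eq_zero_of_toZMod_ne_zero he]
  exact ⟨mul_ne_zero (pow_ne_zero 2 hy) hne, by push_cast; ring⟩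

theorem sq_sub_mul_add_sq_ne_zero_and_even_valuation (hp : p % 3 = 2) {x y : ℚ_[p]}
    (hxy : x ≠ 0 ∨ y ≠ 0) :
    x ^ 2 - x * y + y ^ 2 ≠ 0 ∧ Even (x ^ 2 - x * y + y ^ 2).valuation := by
  rcases le_total ‖x‖ ‖y‖ with hle | hle
  · have hy : y ≠ 0 := fun hy => by simp_all
    obtain ⟨hne, hv⟩ := sq_sub_mul_add_sq_ne_zero_and_valuation_eq hp hy hle
    exact ⟨hne, ⟨y.valuation, by rw [hv]; ring⟩⟩
  · have hx : x ≠ 0 := fun hx => by simp_all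
    obtain ⟨hne, hv⟩ := sq_sub_mul_add_sq_ne_zero_and_valuation_eq hp hx hle
    have hsymm : x ^ 2 - x * y + y ^ 2 = y ^ 2 - y * x + x ^ 2 := by ring
    exact hsymm ▸ ⟨hne, ⟨x.valuation, by rw [hv]; ring⟩⟩

theorem eq_zero_of_sq_sub_mul_add_sq_add_mul_sq_eq_zero (hp : p % 3 = 2) {T : ℚ_[p]}
    (hT : Odd T.valuation) {x y z : ℚ_[p]} (h : x ^ 2 - x * y + y ^ 2 + T * z ^ 2 = 0) :
    x = 0 ∧ y = 0 ∧ z = 0 := by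
  have hT0 : T ≠ 0 := by rintro rfl; simp at hT
  by_cases hxy : x = 0 ∧ y = 0
  · obtain ⟨rfl, rfl⟩ := hxy
    simpa [hT0] using h
  exfalso
  obtain ⟨hQ, hQeven⟩ := sq_sub_mul_add_sq_ne_zero_and_even_valuation hp (not_and_or.mp hxy)
  have hz : z ≠ 0 := by
    rintro rfl
    exact hQ (by simpa using h)
  rw [eq_neg_of_add_eq_zero_left h, valuation_neg, valuation_mul hT0 (pow_ne_zero 2 hz),
    valuation_pow] at hQeven
  obtain ⟨k, hk⟩ := hQeven
  obtain ⟨m, hm⟩ := hT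
  omega

theorem two_mul_dotProduct_ne_neg (hp2 : p ≠ 2) (hp3 : p % 3 = 2)
    {T : ℚ_[p]} (hT : Odd T.valuation) {a b : Fin 3 → ℚ_[p]} (ha : a ⬝ᵥ a = T)
    (hb : b ⬝ᵥ b = T) : 2 * (a ⬝ᵥ b) ≠ -T := by
  intro hab
  have hT0 : T ≠ 0 := by rintro rfl; simp at hT
  have h3T : Odd (3 * T).valuation := by
    rwa [valuation_mul three_ne_zero hT0, valuation_ofNat,
      padicValNat_primes (by omega : p ≠ 3), Nat.cast_zero, zero_add]
  have hcross : a ⨯₃ b ⬝ᵥ a ⨯₃ b = 3 * T ^ 2 / 4 := by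
    rw [cross_dot_cross, ha, hb, dotProduct_comm b a]
    linear_combination (T - 2 * (a ⬝ᵥ b)) / 4 * hab
  obtain ⟨w₁, w₂, hw⟩ := exists_sq_add_sq_add_one_eq_zero hp2
  obtain ⟨x, y, z, hxyz⟩ := exists_smul_add_smul_add_smul_cross_eq (a := a) (b := b)
    (by simp [hcross, hT0]) ![w₁, w₂, 1]
  have hiso := dotProduct_self_smul_add_smul_add_smul_cross a b x y z
  rw [hxyz, ha, hb, vec3_dotProduct] at hiso
  simp only [Fin.isValue, cons_val_zero, cons_val_one, cons_val, mul_one] at hiso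
  have hform : x ^ 2 - x * y + y ^ 2 + 3 * T * (z / 2) ^ 2 = 0 := by
    refine mul_left_cancel₀ hT0 ?_
    linear_combination -hiso + hw - (x * y + z ^ 2 * (T - 2 * (a ⬝ᵥ b)) / 4) * hab
  obtain ⟨rfl, rfl, hz⟩ := eq_zero_of_sq_sub_mul_add_sq_add_mul_sq_eq_zero hp3 h3T hform
  obtain rfl : z = 0 := by simpa using hz
  simpa using congrFun hxyz 2

end Padic

theorem no_rational_triangle_of_mem_T_general (t : ℕ)
    (hT : ∃ p : ℕ, p.Prime ∧ p ≠ 2 ∧ p % 3 = 2 ∧ Odd (t.factorization p)) :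
    ¬ ∃ v : Fin 3 → (Fin 3 → ℚ),
      (∀ i, ∑ j, (v i j) ^ 2 = (t : ℚ)) ∧ (∑ i, v i) = 0 := by
  rintro ⟨v, hnorm, hsum⟩
  obtain ⟨p, hp, hp2, hp3, hodd⟩ := hT
  have := Fact.mk hp
  have hdot (i : Fin 3) : v i ⬝ᵥ v i = t := by simpa [dotProduct, sq] using hnorm i
  have h01 : 2 * (v 0 ⬝ᵥ v 1) = -t := by
    rw [two_mul_dotProduct_eq_of_add_add_eq_zero (by simpa [Fin.sum_univ_three] using hsum),
      hdot, hdot, hdot]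
    ring
  let f := Rat.castHom ℚ_[p]
  refine Padic.two_mul_dotProduct_ne_neg hp2 hp3 (T := t) (a := f ∘ v 0) (b := f ∘ v 1) ?_ ?_ ?_ ?_
  · rwa [Padic.valuation_natCast, ← Nat.factorization_def t hp, Int.odd_coe_nat]
  · rw [← RingHom.map_dotProduct, hdot]; simp [f]
  · rw [← RingHom.map_dotProduct, hdot]; simp [f]
  · rw [← RingHom.map_dotProduct, ← map_ofNat f 2, ← map_mul, h01]; simp [f]

/-- Let `t ≡ 2 (mod 4)` be a positive integer whose square-free part contains
an odd prime factor congruent to 2 mod 3. Then there do not exist three vectors in `ℚ³`,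
each with squared Euclidean norm `t`, summing to the zero vector; i.e. the graph
`G(ℚ³, √t)` contains no triangle. -/
theorem no_rational_triangle_of_mem_T (t : ℕ) (ht : 0 < t) (hmod : t % 4 = 2)
    (hT : ∃ p : ℕ, p.Prime ∧ p ≠ 2 ∧ p % 3 = 2 ∧ Odd (t.factorization p)) :
    ¬ ∃ v : Fin 3 → (Fin 3 → ℚ),
      (∀ i, ∑ j, (v i j) ^ 2 = (t : ℚ)) ∧ (∑ i, v i) = 0 :=
  no_rational_triangle_of_mem_T_general t hT
end
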